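/- arXiv:2403.00620 — 8 statements merged into one kernel-verified Lean document; each statement's English description precedes it below -/
import Mathlib

section
/- Let (X,d) be a metric space and m a Borel measure on X. Let c > 0 and let S : L∞(X,m) → L∞(X,m) be a map such that for every g ∈ L∞(X,m) the class Sg has a representative which is Lipschitz with Lipschitz constant at most c·‖g‖_{L∞}. Let f₀, f₁ ∈ L¹(X,m) with f₀ ≥ 0 and f₁ ≥ 0 m-a.e., and let u ∈ L¹(X,m) satisfy ∫_X g·u dm = ∫_X (Sg)·(f₀ − f₁) dm for every g ∈ L∞(X,m). Then for every real number W such that ∫_X h·(f₀ − f₁) dm ≤ W for every bounded 1-Lipschitz function h : X → ℝ, one has ‖u‖_{L¹} ≤ c·W. -/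
/-!
Test the duality relation against the sign of `u`: this is an `L∞` function `g` of norm at most
`1` with `∫ g u = ‖u‖_{L¹}`. Its image `S g` has a `c`-Lipschitz representative, and clamping that
representative at `±‖S g‖_∞` keeps it Lipschitz, makes it bounded and changes it only on a null
set. Divided by `c` it is an admissible test function for `W`.
-/

open MeasureTheory Filter

theorem abs_max_min_sub_max_min_le {α : Type*} [AddCommGroup α] [LinearOrder α]
    [IsOrderedAddMonoid α] (a b x y : α) :
    |max a (min b x) - max a (min b y)| ≤ |x - y| := by
  rw [max_comm a, max_comm a]
  refine (abs_max_sub_max_le_abs _ _ _).trans ?_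
  simpa using abs_min_sub_min_le_max b x b y

namespace MeasureTheory.Lp

variable {α E : Type*} [MeasurableSpace α] {μ : Measure α} [NormedAddCommGroup E]

theorem ae_norm_le_norm_top (f : Lp E ⊤ μ) : ∀ᵐ x ∂μ, ‖f x‖ ≤ ‖f‖ := by
  rw [Lp.norm_def, toReal_eLpNorm (Lp.aestronglyMeasurable f)]
  exact ae_le_lpNorm_exponent_top (Lp.memLp f)

theorem norm_top_le_of_ae_bound {f : Lp E ⊤ μ} {C : ℝ} (hC : 0 ≤ C)
    (hf : ∀ᵐ x ∂μ, ‖f x‖ ≤ C) : ‖f‖ ≤ C := by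
  rw [Lp.norm_def, eLpNorm_exponent_top]
  exact ENNReal.toReal_le_of_le_ofReal hC (eLpNormEssSup_le_of_ae_bound hf)

theorem exists_norm_le_one_mul_ae_eq_abs {u : α → ℝ} (hu : AEStronglyMeasurable u μ) :
    ∃ g : Lp ℝ ⊤ μ, ‖g‖ ≤ 1 ∧ ∀ᵐ x ∂μ, g x * u x = |u x| := by
  set s : α → ℝ := fun x => if 0 ≤ hu.mk u x then 1 else -1
  have hs_meas : StronglyMeasurable s :=
    .ite (measurableSet_le measurable_const hu.stronglyMeasurable_mk.measurable)
      stronglyMeasurable_const stronglyMeasurable_const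
  have hs_le : ∀ x, ‖s x‖ ≤ 1 := fun x => by by_cases h : 0 ≤ hu.mk u x <;> simp [s, h]
  have hs : MemLp s ⊤ μ := memLp_top_of_bound hs_meas.aestronglyMeasurable 1 (.of_forall hs_le)
  refine ⟨hs.toLp s, norm_top_le_of_ae_bound zero_le_one ?_, ?_⟩
  · filter_upwards [hs.coeFn_toLp] with x hx
    rw [hx]
    exact hs_le x
  · filter_upwards [hs.coeFn_toLp, hu.ae_eq_mk] with x hgx hux
    rw [hgx, hux]
    by_cases h : 0 ≤ hu.mk u x
    · simp [s, h, abs_of_nonneg h]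
    · simp [s, h, abs_of_neg (not_le.1 h)]

theorem exists_bounded_lipschitz_ae_eq {X : Type*} [PseudoMetricSpace X] [MeasurableSpace X]
    {μ : Measure X} (F : Lp ℝ ⊤ μ) {h : X → ℝ} {L : ℝ}
    (hlip : ∀ x y, |h x - h y| ≤ L * dist x y) (hF : F =ᵐ[μ] h) :
    ∃ h' : X → ℝ, (∀ x, |h' x| ≤ ‖F‖) ∧ (∀ x y, |h' x - h' y| ≤ L * dist x y) ∧ F =ᵐ[μ] h' := by
  refine ⟨fun x => max (-‖F‖) (min ‖F‖ (h x)), fun x => ?_, fun x y => ?_, ?_⟩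
  · exact abs_le.2 ⟨le_max_left _ _, max_le (by linarith [norm_nonneg F]) (min_le_left _ _)⟩
  · exact (abs_max_min_sub_max_min_le _ _ _ _).trans (hlip x y)
  · filter_upwards [hF, ae_norm_le_norm_top F] with x hx hbound
    rw [hx, Real.norm_eq_abs, abs_le] at hbound
    rw [hx, min_eq_right hbound.2, max_eq_right hbound.1]

end MeasureTheory.Lp

theorem integral_mul_le_mul_of_forall_one_lipschitz {X : Type*} [PseudoMetricSpace X]
    [MeasurableSpace X] {μ : Measure X} {f : X → ℝ} {W : ℝ}
    (hW : ∀ h : X → ℝ, (∃ Cb : ℝ, ∀ x, |h x| ≤ Cb) → (∀ x y, |h x - h y| ≤ dist x y) →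
      ∫ x, h x * f x ∂μ ≤ W)
    {L : ℝ} (hL : 0 < L) {h : X → ℝ} (hbdd : ∃ Cb : ℝ, ∀ x, |h x| ≤ Cb)
    (hlip : ∀ x y, |h x - h y| ≤ L * dist x y) :
    ∫ x, h x * f x ∂μ ≤ L * W := by
  obtain ⟨Cb, hCb⟩ := hbdd
  have hscaled : ∫ x, h x / L * f x ∂μ ≤ W := by
    refine hW _ ⟨Cb / L, fun x => ?_⟩ fun x y => ?_
    · rw [abs_div, abs_of_pos hL]
      exact div_le_div_of_nonneg_right (hCb x) hL.le
    · rw [div_sub_div_same, abs_div, abs_of_pos hL, div_le_iff₀ hL, mul_comm]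
      exact hlip x y
  calc ∫ x, h x * f x ∂μ = L * ∫ x, h x / L * f x ∂μ := by
        rw [← integral_const_mul]
        congr 1 with x
        field_simp
    _ ≤ L * W := by gcongr

theorem stmt0_general {X : Type*} [MetricSpace X] [MeasurableSpace X]
    (μ : Measure X) (c : ℝ) (hc : 0 < c)
    (S : Lp ℝ ⊤ μ → Lp ℝ ⊤ μ)
    (hSlip : ∀ g : Lp ℝ ⊤ μ, ∃ h : X → ℝ,
      (∀ x y, |h x - h y| ≤ c * ‖g‖ * dist x y) ∧ ⇑(S g) =ᵐ[μ] h)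
    (f₀ f₁ : X → ℝ)
    (u : X → ℝ) (hu : Integrable u μ)
    (hdual : ∀ g : Lp ℝ ⊤ μ,
      ∫ x, g x * u x ∂μ = ∫ x, (S g) x * (f₀ x - f₁ x) ∂μ)
    (W : ℝ)
    (hW : ∀ h : X → ℝ, (∃ Cb : ℝ, ∀ x, |h x| ≤ Cb) →
      (∀ x y, |h x - h y| ≤ dist x y) →
      ∫ x, h x * (f₀ x - f₁ x) ∂μ ≤ W) :
    ∫ x, |u x| ∂μ ≤ c * W := by
  obtain ⟨g, hg_norm, hg_sign⟩ := Lp.exists_norm_le_one_mul_ae_eq_abs hu.aestronglyMeasurable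
  obtain ⟨h, hlip, hSg⟩ := hSlip g
  obtain ⟨h', h'_bdd, h'_lip, hSg'⟩ :=
    Lp.exists_bounded_lipschitz_ae_eq (S g) hlip hSg
  have h'_lip_c : ∀ x y, |h' x - h' y| ≤ c * dist x y := fun x y =>
    (h'_lip x y).trans <| by gcongr; exact mul_le_of_le_one_right hc.le hg_norm
  calc ∫ x, |u x| ∂μ = ∫ x, g x * u x ∂μ := integral_congr_ae (hg_sign.mono fun _ hx => hx.symm)
    _ = ∫ x, (S g) x * (f₀ x - f₁ x) ∂μ := hdual g
    _ = ∫ x, h' x * (f₀ x - f₁ x) ∂μ := integral_congr_ae (hSg'.mono fun _ hx => by simp only [hx])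
    _ ≤ c * W := integral_mul_le_mul_of_forall_one_lipschitz hW hc ⟨_, h'_bdd⟩ h'_lip_c

/-- inequality (eq:W1-He1) of Theorem th:W1-He1.
If `S : L∞ → L∞` maps every `g` to a class with a Lipschitz representative of constant
at most `c·‖g‖_∞`, `f₀, f₁ ∈ L¹` are a.e. nonnegative, and `u ∈ L¹` satisfies the duality
relation `∫ g·u = ∫ (Sg)·(f₀ − f₁)` for all `g ∈ L∞`, then for every upper bound `W` of
`∫ h·(f₀ − f₁)` over bounded `1`-Lipschitz functions `h`, one has `‖u‖_{L¹} ≤ c·W`. -/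
theorem stmt0 {X : Type*} [MetricSpace X] [MeasurableSpace X] [BorelSpace X]
    (μ : Measure X) (c : ℝ) (hc : 0 < c)
    (S : Lp ℝ ⊤ μ → Lp ℝ ⊤ μ)
    (hSlip : ∀ g : Lp ℝ ⊤ μ, ∃ h : X → ℝ,
      (∀ x y, |h x - h y| ≤ c * ‖g‖ * dist x y) ∧ ⇑(S g) =ᵐ[μ] h)
    (f₀ f₁ : X → ℝ) (hf₀ : Integrable f₀ μ) (hf₁ : Integrable f₁ μ)
    (hf₀pos : (0 : X → ℝ) ≤ᵐ[μ] f₀) (hf₁pos : (0 : X → ℝ) ≤ᵐ[μ] f₁)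
    (u : X → ℝ) (hu : Integrable u μ)
    (hdual : ∀ g : Lp ℝ ⊤ μ,
      ∫ x, g x * u x ∂μ = ∫ x, (S g) x * (f₀ x - f₁ x) ∂μ)
    (W : ℝ)
    (hW : ∀ h : X → ℝ, (∃ Cb : ℝ, ∀ x, |h x| ≤ Cb) →
      (∀ x y, |h x - h y| ≤ dist x y) →
      ∫ x, h x * (f₀ x - f₁ x) ∂μ ≤ W) :
    ∫ x, |u x| ∂μ ≤ c * W :=
  stmt0_general μ c hc S hSlip f₀ f₁ u hu hdual W hW
end

section
/- Let (X,d) be a metric space and m a Borel measure on X. Let c > 0 and let S : L∞(X,m) → L∞(X,m) be a map such that for every g ∈ L∞(X,m) one has ‖Sg‖_{L∞} ≤ ‖g‖_{L∞} and the class Sg has a representative which is Lipschitz with Lipschitz constant at most c·‖g‖_{L∞}. Let f₀, f₁ ∈ L¹(X,m) with f₀ ≥ 0 and f₁ ≥ 0 m-a.e., and let u ∈ L¹(X,m) satisfy ∫_X g·u dm = ∫_X (Sg)·(f₀ − f₁) dm for every g ∈ L∞(X,m). Then for every real number B such that ∫_X h·(f₀ − f₁) dm ≤ B for every bounded Lipschitz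 function h : X → ℝ with Lipschitz constant ≤ 1 and sup_X |h| ≤ 1, one has ‖u‖_{L¹} ≤ max(c,1)·B. -/
open MeasureTheory Filter

/-! Test `u` against its sign `g`, which lies in the unit ball of `L∞`: then `‖u‖_{L¹} = ∫ g·u = ∫ (Sg)·(f₀ − f₁)`.
The class `Sg` is bounded by `1` and has a `c`-Lipschitz representative; clipping it to `[-1, 1]`
keeps both properties everywhere, and dividing by `max c 1` makes it admissible in the definition
of `B`. -/

section Linfty

variable {α E : Type*} {m : MeasurableSpace α} {μ : Measure α} [NormedAddCommGroup E]

lemma MeasureTheory.Lp.ae_norm_le_norm_top_s1 (f : Lp E ⊤ μ) : ∀ᵐ x ∂μ, ‖f x‖ ≤ ‖f‖ := by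
  simpa only [Lp.norm_def, toReal_eLpNorm (Lp.aestronglyMeasurable f)]
    using ae_le_lpNorm_exponent_top (Lp.memLp f)

lemma MeasureTheory.MemLp.norm_toLp_top_le {f : α → E} (hf : MemLp f ⊤ μ) {C : ℝ} (hC : 0 ≤ C)
    (hfC : ∀ᵐ x ∂μ, ‖f x‖ ≤ C) : ‖hf.toLp f‖ ≤ C := by
  rw [Lp.norm_toLp, eLpNorm_exponent_top]
  exact ENNReal.toReal_le_of_le_ofReal hC (eLpNormEssSup_le_of_ae_bound hfC)

end Linfty

lemma monotone_sign_real : Monotone fun r : ℝ => ((SignType.sign r : SignType) : ℝ) := by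
  have hcast : Monotone (SignType.cast : SignType → ℝ) := by
    intro s t hst
    cases s <;> cases t <;> simp_all
  exact hcast.comp SignType.sign.monotone

lemma exists_Linfty_norm_le_one_mul_ae_eq_abs {α : Type*} {m : MeasurableSpace α}
    {μ : Measure α} {u : α → ℝ} (hu : AEStronglyMeasurable u μ) :
    ∃ g : Lp ℝ ⊤ μ, ‖g‖ ≤ 1 ∧ ∀ᵐ x ∂μ, g x * u x = |u x| := by
  set s : α → ℝ := fun x => SignType.sign (u x)
  have hs_meas : AEStronglyMeasurable s μ :=
    (monotone_sign_real.measurable.comp_aemeasurable hu.aemeasurable).aestronglyMeasurable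
  have hs_bound : ∀ᵐ x ∂μ, ‖s x‖ ≤ 1 :=
    Eventually.of_forall fun x => by
      rcases lt_trichotomy (u x) 0 with h | h | h <;> simp [s, h]
  have hs : MemLp s ⊤ μ := memLp_top_of_bound hs_meas 1 hs_bound
  refine ⟨hs.toLp s, hs.norm_toLp_top_le zero_le_one hs_bound, ?_⟩
  filter_upwards [hs.coeFn_toLp] with x hx
  rw [hx, sign_mul_self]

section BoundedLipschitz

variable {X : Type*} [PseudoMetricSpace X] [MeasurableSpace X] {μ : Measure X}

lemma exists_lipschitz_bounded_ae_eq {h : X → ℝ} {L C : ℝ} (hC : 0 ≤ C)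
    (hlip : ∀ x y, |h x - h y| ≤ L * dist x y) (hbound : ∀ᵐ x ∂μ, |h x| ≤ C) :
    ∃ k : X → ℝ, (∀ x y, |k x - k y| ≤ L * dist x y) ∧ (∀ x, |k x| ≤ C) ∧ h =ᵐ[μ] k := by
  set k : X → ℝ := fun x => max (min C (h x)) (-C)
  refine ⟨k, fun x y => ?_, fun x => ?_, ?_⟩
  · calc |k x - k y| ≤ |min C (h x) - min C (h y)| := abs_max_sub_max_le_abs _ _ _
      _ ≤ |h x - h y| := by simpa using abs_min_sub_min_le_max C (h x) C (h y)
      _ ≤ L * dist x y := hlip x y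
  · exact abs_le.2 ⟨le_max_right _ _, max_le (min_le_left _ _) (by linarith)⟩
  · filter_upwards [hbound] with x hx
    rw [abs_le] at hx
    simp only [k, min_eq_right hx.2, max_eq_left hx.1]

lemma integral_mul_le_mul_of_lipschitz_of_bounded {f : X → ℝ} {B M : ℝ} (hM : 0 < M)
    (hB : ∀ h : X → ℝ, (∀ x y, |h x - h y| ≤ dist x y) → (∀ x, |h x| ≤ 1) →
      ∫ x, h x * f x ∂μ ≤ B)
    {k : X → ℝ} (hk_lip : ∀ x y, |k x - k y| ≤ M * dist x y) (hk_bound : ∀ x, |k x| ≤ M) :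
    ∫ x, k x * f x ∂μ ≤ M * B := by
  have hscaled : ∫ x, k x / M * f x ∂μ ≤ B := by
    refine hB _ (fun x y => ?_) (fun x => ?_)
    · rw [← sub_div, abs_div, abs_of_pos hM, div_le_iff₀' hM]
      exact hk_lip x y
    · rw [abs_div, abs_of_pos hM, div_le_one hM]
      exact hk_bound x
  calc ∫ x, k x * f x ∂μ = M * ∫ x, k x / M * f x ∂μ := by
        rw [← integral_const_mul]
        congr 1 with x
        field_simp
    _ ≤ M * B := mul_le_mul_of_nonneg_left hscaled hM.le

end BoundedLipschitz

theorem stmt1_general {X : Type*} [MetricSpace X] [MeasurableSpace X]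
    (μ : Measure X) (c : ℝ)
    (S : Lp ℝ ⊤ μ → Lp ℝ ⊤ μ)
    (hSnorm : ∀ g : Lp ℝ ⊤ μ, ‖S g‖ ≤ ‖g‖)
    (hSlip : ∀ g : Lp ℝ ⊤ μ, ∃ h : X → ℝ,
      (∀ x y, |h x - h y| ≤ c * ‖g‖ * dist x y) ∧ ⇑(S g) =ᵐ[μ] h)
    (f₀ f₁ : X → ℝ)
    (u : X → ℝ) (hu : Integrable u μ)
    (hdual : ∀ g : Lp ℝ ⊤ μ,
      ∫ x, g x * u x ∂μ = ∫ x, (S g) x * (f₀ x - f₁ x) ∂μ)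
    (B : ℝ)
    (hB : ∀ h : X → ℝ, (∀ x y, |h x - h y| ≤ dist x y) → (∀ x, |h x| ≤ 1) →
      ∫ x, h x * (f₀ x - f₁ x) ∂μ ≤ B) :
    ∫ x, |u x| ∂μ ≤ max c 1 * B := by
  obtain ⟨g, hg_norm, hg_sign⟩ := exists_Linfty_norm_le_one_mul_ae_eq_abs hu.aestronglyMeasurable
  obtain ⟨h, h_lip, h_ae⟩ := hSlip g
  have hSg_bound : ∀ᵐ x ∂μ, |h x| ≤ 1 := by
    filter_upwards [Lp.ae_norm_le_norm_top_s1 (S g), h_ae] with x hx hxh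
    rw [← hxh, ← Real.norm_eq_abs]
    exact hx.trans ((hSnorm g).trans hg_norm)
  obtain ⟨k, k_lip, k_bound, h_eq_k⟩ := exists_lipschitz_bounded_ae_eq zero_le_one h_lip hSg_bound
  have hcg : c * ‖g‖ ≤ max c 1 :=
    calc c * ‖g‖ ≤ max c 0 * ‖g‖ := mul_le_mul_of_nonneg_right (le_max_left _ _) (norm_nonneg _)
      _ ≤ max c 0 * 1 := mul_le_mul_of_nonneg_left hg_norm (le_max_right _ _)
      _ ≤ max c 1 := by rw [mul_one]; exact max_le_max le_rfl zero_le_one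
  calc ∫ x, |u x| ∂μ = ∫ x, g x * u x ∂μ := integral_congr_ae (hg_sign.mono fun x hx => hx.symm)
    _ = ∫ x, k x * (f₀ x - f₁ x) ∂μ := by
        rw [hdual g]
        refine integral_congr_ae ?_
        filter_upwards [h_ae, h_eq_k] with x hx hxk
        rw [hx, hxk]
    _ ≤ max c 1 * B :=
        integral_mul_le_mul_of_lipschitz_of_bounded (by positivity) hB
          (fun x y => (k_lip x y).trans (mul_le_mul_of_nonneg_right hcg dist_nonneg))
          (fun x => (k_bound x).trans (le_max_right _ _))

/-- inequality (eq:referee_bl_ac) of Theorem res:referee_bl.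
If `S : L∞ → L∞` satisfies `‖Sg‖_∞ ≤ ‖g‖_∞` and maps every `g` to a class with a Lipschitz
representative of constant at most `c·‖g‖_∞`, `f₀, f₁ ∈ L¹` are a.e. nonnegative, and
`u ∈ L¹` satisfies `∫ g·u = ∫ (Sg)·(f₀ − f₁)` for all `g ∈ L∞`, then for every upper bound
`B` of `∫ h·(f₀ − f₁)` over bounded Lipschitz `h` with `Lip(h) ≤ 1` and `sup|h| ≤ 1`,
one has `‖u‖_{L¹} ≤ max(c,1)·B`. -/
theorem stmt1 {X : Type*} [MetricSpace X] [MeasurableSpace X] [BorelSpace X]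
    (μ : Measure X) (c : ℝ) (hc : 0 < c)
    (S : Lp ℝ ⊤ μ → Lp ℝ ⊤ μ)
    (hSnorm : ∀ g : Lp ℝ ⊤ μ, ‖S g‖ ≤ ‖g‖)
    (hSlip : ∀ g : Lp ℝ ⊤ μ, ∃ h : X → ℝ,
      (∀ x y, |h x - h y| ≤ c * ‖g‖ * dist x y) ∧ ⇑(S g) =ᵐ[μ] h)
    (f₀ f₁ : X → ℝ) (hf₀ : Integrable f₀ μ) (hf₁ : Integrable f₁ μ)
    (hf₀pos : (0 : X → ℝ) ≤ᵐ[μ] f₀) (hf₁pos : (0 : X → ℝ) ≤ᵐ[μ] f₁)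
    (u : X → ℝ) (hu : Integrable u μ)
    (hdual : ∀ g : Lp ℝ ⊤ μ,
      ∫ x, g x * u x ∂μ = ∫ x, (S g) x * (f₀ x - f₁ x) ∂μ)
    (B : ℝ)
    (hB : ∀ h : X → ℝ, (∀ x y, |h x - h y| ≤ dist x y) → (∀ x, |h x| ≤ 1) →
      ∫ x, h x * (f₀ x - f₁ x) ∂μ ≤ B) :
    ∫ x, |u x| ∂μ ≤ max c 1 * B :=
  stmt1_general μ c S hSnorm hSlip f₀ f₁ u hu hdual B hB
end

section
/- Let (X,d) be a complete separable metric space and m a nonnegative Borel measure on X which is finite on bounded sets and whose support is all of X. Then for every finite nonnegative Borel measure μ on X and every ε > 0 there exists f ∈ L¹(X,m) with f ≥ 0 m-a.e. such that |∫_X h dμ − ∫_X h·f dm| ≤ ε for every bounded Lipschitz function h : X → ℝ with Lipschitz constant ≤ 1 and sup_X |h| ≤ 1. -/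
/-!
Cover `X` by countably many disjoint measurable pieces `A n`, each inside a ball `ball (z n) δ`
(separability), and keep finitely many of them, carrying all but `ε / 2` of the mass of `ν`.
Spreading the mass `ν (A n)` uniformly (with respect to `μ`) over `ball (z n) δ` gives the
density `f`; this is possible because these balls have positive and finite `μ`-measure.
For a `1`-Lipschitz `h`, both `∫_{A n} h dν` and the integral of `h` against the spread-out
mass are within `δ ν (A n)` of `ν (A n) h (z n)`; the discarded pieces cost at most `ε / 2`
since `|h| ≤ 1`.
-/

open MeasureTheory Filter Function Metric Set
open scoped NNReal ENNReal

section BallDensity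

variable {X : Type*} [MeasurableSpace X]

lemma exists_measureReal_compl_biUnion_range_le {ν : Measure X} [IsFiniteMeasure ν]
    {A : ℕ → Set X} (hAm : ∀ n, MeasurableSet (A n)) (hcover : ⋃ n, A n = univ)
    (hdisj : Pairwise (Disjoint on A)) {η : ℝ} (hη : 0 < η) :
    ∃ N, ν.real (⋃ n ∈ Finset.range N, A n)ᶜ ≤ η := by
  have htail := (ENNReal.tendsto_toReal ENNReal.zero_ne_top).comp
    (tendsto_measure_biUnion_Ici_zero_of_pairwise_disjoint (μ := ν)
      (fun n ↦ (hAm n).nullMeasurableSet) hdisj)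
  obtain ⟨N, hN⟩ := (htail.eventually (ge_mem_nhds hη)).exists
  refine ⟨N, (measureReal_mono (fun x hx ↦ ?_) (measure_ne_top ν _)).trans hN⟩
  obtain ⟨n, hn⟩ := mem_iUnion.1 (hcover ▸ mem_univ x)
  simp only [mem_compl_iff, mem_iUnion, Finset.mem_range, not_exists] at hx
  exact mem_iUnion₂.2 ⟨n, not_lt.1 fun hnN ↦ hx n hnN hn, hn⟩

lemma abs_integral_sub_le_abs_setIntegral_sub_add {ν : Measure X} [IsFiniteMeasure ν]
    {h : X → ℝ} {C : ℝ} (hm : AEStronglyMeasurable h ν) (hb : ∀ x, |h x| ≤ C) {U : Set X}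
    (hU : MeasurableSet U) (a : ℝ) :
    |∫ x, h x ∂ν - a| ≤ |∫ x in U, h x ∂ν - a| + C * ν.real Uᶜ := by
  have hb' : ∀ x, ‖h x‖ ≤ C := fun x ↦ (Real.norm_eq_abs _).trans_le (hb x)
  have hUc : |∫ x in Uᶜ, h x ∂ν| ≤ C * ν.real Uᶜ :=
    norm_setIntegral_le_of_norm_le_const (measure_lt_top ν Uᶜ) fun x _ ↦ hb' x
  rw [← integral_add_compl hU (.of_bound hm C (ae_of_all _ hb')), add_sub_right_comm]
  exact (abs_add_le _ _).trans (by gcongr)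

variable [MetricSpace X] {h : X → ℝ} {K : ℝ≥0} {δ : ℝ}

lemma LipschitzWith.ae_norm_sub_le_of_ae_mem_ball {ρ : Measure X} {z : X}
    (hh : LipschitzWith K h) (hρ : ∀ᵐ x ∂ρ, x ∈ ball z δ) :
    ∀ᵐ x ∂ρ, ‖h x - h z‖ ≤ K * δ := by
  filter_upwards [hρ] with x hx
  exact (hh.dist_le_mul x z).trans (by gcongr; exact (mem_ball.1 hx).le)

noncomputable def ballDensity {ι : Type*} (μ ν : Measure X) (s : Finset ι) (A : ι → Set X)
    (z : ι → X) (δ : ℝ) : X → ℝ :=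
  ∑ i ∈ s, (ball (z i) δ).indicator fun _ ↦ ν.real (A i) / μ.real (ball (z i) δ)

lemma ballDensity_nonneg {ι : Type*} {μ ν : Measure X} {s : Finset ι} {A : ι → Set X}
    {z : ι → X} (x : X) : 0 ≤ ballDensity μ ν s A z δ x := by
  rw [ballDensity, Finset.sum_apply]
  exact Finset.sum_nonneg fun i _ ↦ indicator_nonneg (fun _ _ ↦ by positivity) x

variable [OpensMeasurableSpace X]

lemma exists_measurable_partition_subset_ball [Nonempty X] [TopologicalSpace.SeparableSpace X]
    (hδ : 0 < δ) :
    ∃ (A : ℕ → Set X) (z : ℕ → X), (∀ n, MeasurableSet (A n)) ∧ ⋃ n, A n = univ ∧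
      Pairwise (Disjoint on A) ∧ ∀ n, A n ⊆ ball (z n) δ := by
  obtain ⟨A, hAm, hAb, hAdiam, hcover, hdisj⟩ :=
    SeparableSpace.exists_measurable_partition_diam_le X (half_pos hδ)
  have hz : ∀ n, ∃ z, A n ⊆ ball z δ := fun n ↦ by
    rcases (A n).eq_empty_or_nonempty with hA | ⟨z, hz⟩
    · exact ⟨Classical.arbitrary X, hA ▸ empty_subset _⟩
    · exact ⟨z, fun x hx ↦ mem_ball.2 <|
        ((dist_le_diam_of_mem (hAb n) hx hz).trans (hAdiam n)).trans_lt (half_lt_self hδ)⟩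
  choose z hz using hz
  exact ⟨A, z, hAm, hcover, hdisj, hz⟩

lemma LipschitzWith.integrable_of_ae_mem_ball {ρ : Measure X} [IsFiniteMeasure ρ] {z : X}
    (hh : LipschitzWith K h) (hρ : ∀ᵐ x ∂ρ, x ∈ ball z δ) : Integrable h ρ := by
  refine .of_bound hh.continuous.aestronglyMeasurable (‖h z‖ + K * δ) ?_
  filter_upwards [hh.ae_norm_sub_le_of_ae_mem_ball hρ] with x hx
  exact (norm_le_norm_add_norm_sub' (h x) (h z)).trans (by gcongr)

lemma LipschitzWith.abs_integral_sub_mul_le_of_ae_mem_ball {ρ : Measure X} [IsFiniteMeasure ρ]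
    {z : X} (hh : LipschitzWith K h) (hρ : ∀ᵐ x ∂ρ, x ∈ ball z δ) :
    |∫ x, h x ∂ρ - ρ.real univ * h z| ≤ K * δ * ρ.real univ := by
  rw [← smul_eq_mul, ← integral_const, ← integral_sub (hh.integrable_of_ae_mem_ball hρ)
    (integrable_const _)]
  exact norm_integral_le_of_norm_le_const (hh.ae_norm_sub_le_of_ae_mem_ball hρ)

lemma LipschitzWith.abs_setIntegral_sub_mul_setIntegral_ball_le (μ ν : Measure X)
    [IsFiniteMeasure ν] (hh : LipschitzWith K h) {A : Set X} {z : X} (hAm : MeasurableSet A)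
    (hAz : A ⊆ ball z δ) (hμ₀ : μ (ball z δ) ≠ 0) (hμ : μ (ball z δ) ≠ ∞) :
    |∫ x in A, h x ∂ν - ν.real A / μ.real (ball z δ) * ∫ x in ball z δ, h x ∂μ|
      ≤ 2 * K * δ * ν.real A := by
  have : IsFiniteMeasure (μ.restrict (ball z δ)) := isFiniteMeasure_restrict.2 hμ
  have hν := hh.abs_integral_sub_mul_le_of_ae_mem_ball
    (ae_restrict_of_forall_mem (μ := ν) hAm hAz)
  have hμ' := hh.abs_integral_sub_mul_le_of_ae_mem_ball
    (ae_restrict_mem (μ := μ) (measurableSet_ball (x := z) (ε := δ)))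
  rw [measureReal_restrict_apply_univ] at hν hμ'
  set c := ν.real A / μ.real (ball z δ)
  have hc : c * μ.real (ball z δ) = ν.real A :=
    div_mul_cancel₀ _ (ENNReal.toReal_pos hμ₀ hμ).ne'
  have hc₀ : 0 ≤ c := by positivity
  calc |∫ x in A, h x ∂ν - c * ∫ x in ball z δ, h x ∂μ|
      = |(∫ x in A, h x ∂ν - ν.real A * h z)
          - c * (∫ x in ball z δ, h x ∂μ - μ.real (ball z δ) * h z)| := by
        rw [mul_sub, ← mul_assoc, hc]; ring_nf
    _ ≤ K * δ * ν.real A + c * (K * δ * μ.real (ball z δ)) := by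
        refine (abs_sub _ _).trans (add_le_add hν ?_)
        rw [abs_mul, abs_of_nonneg hc₀]
        gcongr
    _ = 2 * K * δ * ν.real A := by rw [← hc]; ring

variable {ι : Type*} {μ ν : Measure X} {s : Finset ι} {A : ι → Set X} {z : ι → X}

lemma integrable_ballDensity (hμ : ∀ i, μ (ball (z i) δ) ≠ ∞) :
    Integrable (ballDensity μ ν s A z δ) μ :=
  integrable_finsetSum' s fun i _ ↦
    (integrable_indicator_iff measurableSet_ball).2 (integrableOn_const (hμ i))

lemma integral_mul_ballDensity (hh : LipschitzWith K h) (hμ : ∀ i, μ (ball (z i) δ) ≠ ∞) :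
    ∫ x, h x * ballDensity μ ν s A z δ x ∂μ =
      ∑ i ∈ s, ν.real (A i) / μ.real (ball (z i) δ) * ∫ x in ball (z i) δ, h x ∂μ := by
  have hind : ∀ i x, h x * (ball (z i) δ).indicator
      (fun _ ↦ ν.real (A i) / μ.real (ball (z i) δ)) x
      = (ball (z i) δ).indicator (fun x ↦ ν.real (A i) / μ.real (ball (z i) δ) * h x) x :=
    fun i x ↦ by rw [mul_comm, ← indicator_mul_left]
  have hint : ∀ i, IntegrableOn h (ball (z i) δ) μ := fun i ↦
    have : IsFiniteMeasure (μ.restrict (ball (z i) δ)) := isFiniteMeasure_restrict.2 (hμ i)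
    hh.integrable_of_ae_mem_ball (ae_restrict_mem measurableSet_ball)
  simp only [ballDensity, Finset.sum_apply, Finset.mul_sum, hind]
  rw [integral_finsetSum s fun i _ ↦
    IntegrableOn.integrable_indicator ((hint i).const_mul _) measurableSet_ball]
  simp only [integral_indicator measurableSet_ball, integral_const_mul]

lemma LipschitzWith.abs_setIntegral_biUnion_sub_integral_mul_ballDensity_le [IsFiniteMeasure ν]
    (hh : LipschitzWith K h) (hAm : ∀ i, MeasurableSet (A i))
    (hdisj : (s : Set ι).PairwiseDisjoint A) (hAz : ∀ i, A i ⊆ ball (z i) δ)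
    (hμ₀ : ∀ i, μ (ball (z i) δ) ≠ 0) (hμ : ∀ i, μ (ball (z i) δ) ≠ ∞) :
    |∫ x in ⋃ i ∈ s, A i, h x ∂ν - ∫ x, h x * ballDensity μ ν s A z δ x ∂μ|
      ≤ 2 * K * δ * ν.real (⋃ i ∈ s, A i) := by
  rw [integral_biUnion_finset s (fun i _ ↦ hAm i) hdisj fun i _ ↦
      hh.integrable_of_ae_mem_ball (ae_restrict_of_forall_mem (hAm i) (hAz i)),
    integral_mul_ballDensity hh hμ, measureReal_biUnion_finset hdisj fun i _ ↦ hAm i,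
    ← Finset.sum_sub_distrib, Finset.mul_sum]
  exact (Finset.abs_sum_le_sum_abs _ _).trans <| Finset.sum_le_sum fun i _ ↦
    hh.abs_setIntegral_sub_mul_setIntegral_ball_le μ ν (hAm i) (hAz i) (hμ₀ i) (hμ i)

end BallDensity

theorem stmt3_general {X : Type*} [MetricSpace X] [SecondCountableTopology X]
    [MeasurableSpace X] [BorelSpace X]
    (μ : Measure X)
    (hfinbdd : ∀ s : Set X, Bornology.IsBounded s → μ s < ⊤)
    (hsupp : ∀ (x : X) (r : ℝ), 0 < r → 0 < μ (Metric.ball x r))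
    (ν : Measure X) [IsFiniteMeasure ν] (ε : ℝ) (hε : 0 < ε) :
    ∃ f : X → ℝ, Integrable f μ ∧ (0 : X → ℝ) ≤ᵐ[μ] f ∧
      ∀ h : X → ℝ, (∀ x y, |h x - h y| ≤ dist x y) → (∀ x, |h x| ≤ 1) →
        |(∫ x, h x ∂ν) - ∫ x, h x * f x ∂μ| ≤ ε := by
  rcases isEmpty_or_nonempty X with hX | hX
  · exact ⟨0, integrable_zero _ _ _, EventuallyLE.rfl,
      fun h _ _ ↦ by simp [integral_of_isEmpty, hε.le]⟩
  set δ := ε / (4 * (ν.real univ + 1)) with hδdef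
  have hδ : 0 < δ := by positivity
  obtain ⟨A, z, hAm, hcover, hdisj, hAz⟩ := exists_measurable_partition_subset_ball (X := X) hδ
  obtain ⟨N, hN⟩ := exists_measureReal_compl_biUnion_range_le (ν := ν) hAm hcover hdisj
    (half_pos hε)
  set U := ⋃ n ∈ Finset.range N, A n
  have hμ₀ n : μ (ball (z n) δ) ≠ 0 := (hsupp _ _ hδ).ne'
  have hμ n : μ (ball (z n) δ) ≠ ∞ := (hfinbdd _ isBounded_ball).ne
  have hδU : 2 * δ * ν.real U ≤ ε / 2 := calc
    _ ≤ 2 * δ * (ν.real univ + 1) := mul_le_mul_of_nonneg_left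
        (by linarith [measureReal_mono (subset_univ U) (measure_ne_top ν univ)]) (by linarith)
    _ = ε / 2 := by rw [hδdef]; field_simp; ring
  set f := ballDensity μ ν (Finset.range N) A z δ
  refine ⟨f, integrable_ballDensity hμ, ae_of_all _ ballDensity_nonneg, fun h hlip hb ↦ ?_⟩
  have hh : LipschitzWith 1 h := .of_dist_le_mul fun x y ↦ by simpa [Real.dist_eq] using hlip x y
  have hU := hh.abs_setIntegral_biUnion_sub_integral_mul_ballDensity_le (ν := ν)
    (s := Finset.range N) hAm (hdisj.set_pairwise _) hAz hμ₀ hμ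
  rw [NNReal.coe_one, mul_one] at hU
  have hsplit := abs_integral_sub_le_abs_setIntegral_sub_add (ν := ν) (U := U)
    hh.continuous.aestronglyMeasurable hb (Finset.measurableSet_biUnion _ fun n _ ↦ hAm n)
    (∫ x, h x * f x ∂μ)
  linarith

/-- Corollary res:density_ac.
On a complete separable metric space with a nonnegative Borel measure `μ` which is finite
on bounded sets and has full support, every finite nonnegative Borel measure `ν` can be
approximated in the bounded-Lipschitz dual distance by measures absolutely continuous with
respect to `μ`: for every `ε > 0` there is a nonnegative `f ∈ L¹(μ)` such that
`|∫ h dν − ∫ h·f dμ| ≤ ε` for every Lipschitz `h` with `Lip(h) ≤ 1` and `sup|h| ≤ 1`. -/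
theorem stmt3 {X : Type*} [MetricSpace X] [CompleteSpace X] [SecondCountableTopology X]
    [MeasurableSpace X] [BorelSpace X]
    (μ : Measure X)
    (hfinbdd : ∀ s : Set X, Bornology.IsBounded s → μ s < ⊤)
    (hsupp : ∀ (x : X) (r : ℝ), 0 < r → 0 < μ (Metric.ball x r))
    (ν : Measure X) [IsFiniteMeasure ν] (ε : ℝ) (hε : 0 < ε) :
    ∃ f : X → ℝ, Integrable f μ ∧ (0 : X → ℝ) ≤ᵐ[μ] f ∧
      ∀ h : X → ℝ, (∀ x y, |h x - h y| ≤ dist x y) → (∀ x, |h x| ≤ 1) →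
        |(∫ x, h x ∂ν) - ∫ x, h x * f x ∂μ| ≤ ε :=
  stmt3_general μ hfinbdd hsupp ν ε hε
end

section
/- Let (X,d) be a nonempty metric space with diameter at most D < ∞ and let m be a Borel measure on X. Let c > 0 and let T : L∞(X,m) → L∞(X,m) be a linear map such that T maps the class of the constant function 1 to itself, and such that for every g ∈ L∞(X,m) the class Tg admits a representative which is Lipschitz with Lipschitz constant at most c·‖g‖_{L∞}. Then for every bounded Lipschitz function f : X → ℝ, the class T[f] admits a representative which is Lipschitz with Lipschitz constant at most D·c·Lip(f), where Lip(f) is the Lipschitz constant of f. -/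
/-!
Write `f = (f - f x₀) + f x₀ • 1`. Since `T` fixes constants, `T f` and `T (f - f x₀)` differ by
the constant `f x₀`, and `‖f - f x₀‖_∞ ≤ L · D` because every point lies within `D` of `x₀`.
The `L∞`-to-Lipschitz bound applied to `f - f x₀` then gives the constant `c · L · D`.
-/

open MeasureTheory Filter

namespace MeasureTheory

variable {α : Type*} [MeasurableSpace α] {μ : Measure α}

theorem Lp.norm_le_of_ae_bound_top {E : Type*} [NormedAddCommGroup E] {f : Lp E ⊤ μ} {C : ℝ}
    (hC : 0 ≤ C) (hfC : ∀ᵐ x ∂μ, ‖f x‖ ≤ C) : ‖f‖ ≤ C := by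
  rw [Lp.norm_def, eLpNorm_exponent_top]
  exact ENNReal.toReal_le_of_le_ofReal hC (eLpNormEssSup_le_of_ae_bound hfC)

theorem MemLp.toLp_eq_toLp_sub_const_add_smul_one {f : α → ℝ} (hf : MemLp f ⊤ μ) (a : ℝ) :
    hf.toLp f = (hf.sub (memLp_top_const a)).toLp (fun x => f x - a) +
      a • (memLp_top_const (1 : ℝ)).toLp (fun _ => 1) := by
  rw [← MemLp.toLp_const_smul, ← MemLp.toLp_add]
  exact MemLp.toLp_congr _ _ (Eventually.of_forall fun x => by simp)

theorem Lp.coeFn_add_smul_ae_eq_add_const {p : ENNReal} {u v : Lp ℝ p μ} {h : α → ℝ}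
    (hu : u =ᵐ[μ] h) (hv : v =ᵐ[μ] fun _ => 1) (a : ℝ) :
    ⇑(u + a • v) =ᵐ[μ] fun x => h x + a := by
  filter_upwards [Lp.coeFn_add u (a • v), Lp.coeFn_smul a v, hu, hv] with x hadd hsmul hux hvx
  rw [hadd, Pi.add_apply, hsmul, Pi.smul_apply, hux, hvx, smul_eq_mul, mul_one]

end MeasureTheory

theorem stmt5_general {X : Type*} [MetricSpace X] [Nonempty X] [MeasurableSpace X]
    (μ : Measure X) (D : ℝ) (hD : ∀ x y : X, dist x y ≤ D)
    (c : ℝ) (hc : 0 < c)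
    (T : Lp ℝ ⊤ μ →ₗ[ℝ] Lp ℝ ⊤ μ)
    (hT1 : ∀ o : Lp ℝ ⊤ μ, ⇑o =ᵐ[μ] (fun _ => (1 : ℝ)) → ⇑(T o) =ᵐ[μ] (fun _ => (1 : ℝ)))
    (hTlip : ∀ g : Lp ℝ ⊤ μ, ∃ h : X → ℝ,
      (∀ x y, |h x - h y| ≤ c * ‖g‖ * dist x y) ∧ ⇑(T g) =ᵐ[μ] h) :
    ∀ (f : X → ℝ) (hf : MemLp f ⊤ μ) (L : ℝ), 0 ≤ L →
      (∀ x y, |f x - f y| ≤ L * dist x y) → (∃ Cb : ℝ, ∀ x, |f x| ≤ Cb) →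
      ∃ h : X → ℝ, (∀ x y, |h x - h y| ≤ D * c * L * dist x y) ∧
        ⇑(T (hf.toLp f)) =ᵐ[μ] h := by
  intro f hf L hL hfL _
  obtain ⟨x₀⟩ := ‹Nonempty X›
  set a := f x₀
  have hosc : ∀ x, |f x - a| ≤ L * D := fun x =>
    (hfL x x₀).trans (mul_le_mul_of_nonneg_left (hD x x₀) hL)
  have hg : MemLp (fun x => f x - a) ⊤ μ := hf.sub (memLp_top_const a)
  have hG : ‖hg.toLp _‖ ≤ L * D :=
    Lp.norm_le_of_ae_bound_top ((abs_nonneg _).trans (hosc x₀))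
      (hg.coeFn_toLp.mono fun x hx => by rw [hx]; exact hosc x)
  obtain ⟨h, hh, hTG⟩ := hTlip (hg.toLp _)
  refine ⟨fun x => h x + a, fun x y => ?_, ?_⟩
  · calc |h x + a - (h y + a)| = |h x - h y| := by rw [add_sub_add_right_eq_sub]
      _ ≤ c * ‖hg.toLp _‖ * dist x y := hh x y
      _ ≤ c * (L * D) * dist x y := by gcongr
      _ = D * c * L * dist x y := by ring
  · rw [hf.toLp_eq_toLp_sub_const_add_smul_one a, map_add, map_smul]
    exact Lp.coeFn_add_smul_ae_eq_add_const hTG (hT1 _ (memLp_top_const 1).coeFn_toLp) a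

/-- Lemma res:diam_ltl.
On a nonempty metric space of diameter at most `D`, if the linear map `T : L∞ → L∞`
preserves the class of the constant function `1` and satisfies the `L∞`-to-Lipschitz
contraction property with constant `c`, then for every bounded `L`-Lipschitz `f : X → ℝ`
the class `T[f]` admits a Lipschitz representative with constant at most `D·c·L`. -/
theorem stmt5 {X : Type*} [MetricSpace X] [Nonempty X] [MeasurableSpace X] [BorelSpace X]
    (μ : Measure X) (D : ℝ) (hD : ∀ x y : X, dist x y ≤ D)
    (c : ℝ) (hc : 0 < c)
    (T : Lp ℝ ⊤ μ →ₗ[ℝ] Lp ℝ ⊤ μ)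
    (hT1 : ∀ o : Lp ℝ ⊤ μ, ⇑o =ᵐ[μ] (fun _ => (1 : ℝ)) → ⇑(T o) =ᵐ[μ] (fun _ => (1 : ℝ)))
    (hTlip : ∀ g : Lp ℝ ⊤ μ, ∃ h : X → ℝ,
      (∀ x y, |h x - h y| ≤ c * ‖g‖ * dist x y) ∧ ⇑(T g) =ᵐ[μ] h) :
    ∀ (f : X → ℝ) (hf : MemLp f ⊤ μ) (L : ℝ), 0 ≤ L →
      (∀ x y, |f x - f y| ≤ L * dist x y) → (∃ Cb : ℝ, ∀ x, |f x| ≤ Cb) →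
      ∃ h : X → ℝ, (∀ x y, |h x - h y| ≤ D * c * L * dist x y) ∧
        ⇑(T (hf.toLp f)) =ᵐ[μ] h :=
  stmt5_general μ D hD c hc T hT1 hTlip
end

section
/- Let m be a finite measure on a measurable space X and let T : L¹(X,m) → L¹(X,m) be a linear operator which is positivity-preserving (u ≥ 0 a.e. implies Tu ≥ 0 a.e.) and mass-preserving (∫_X Tu dm = ∫_X u dm for all u ∈ L¹(X,m)). Let f ∈ L∞(X,m), set A = {f > 0}, and let K ≥ 0 be such that ∫_A T(χ_{X∖A}) dm ≤ K/2 and ∫_{X∖A} T(χ_A) dm ≤ K/2. Then ∫_X √(T(f⁺)·T(f⁻)) dm ≤ √(K·‖f‖_{L∞}·‖f‖_{L¹}), where f⁺ = max(f,0) and f⁻ = max(−f,0). -/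
/-!
Split `X` into `A = {f > 0}` and its complement. Since `|f| ≤ ‖f‖_∞ =: C` a.e., we have
`f⁺ ≤ C χ_A` and `f⁻ ≤ C χ_{X∖A}`, so by positivity `T f⁻` has mass at most `C K / 2` on `A`
and `T f⁺` has mass at most `C K / 2` off `A`, while by mass preservation `T f^±` has total
mass `‖f^±‖₁`. Cauchy–Schwarz on each piece bounds the integral by
`√(‖f⁺‖₁ · CK/2) + √(CK/2 · ‖f⁻‖₁)`, and `√x + √y ≤ √(2(x + y))` finishes.
-/

open MeasureTheory Filter Real

lemma sqrt_mul_sqrt_add_sqrt_mul_sqrt_le {a b c : ℝ} (ha : 0 ≤ a) (hc : 0 ≤ c) :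
    √a * √b + √b * √c ≤ √(2 * b * (a + c)) := by
  have hsum : √a + √c ≤ √(2 * (a + c)) :=
    (le_sqrt (by positivity) (by positivity)).2 <| by
      nlinarith [sq_sqrt ha, sq_sqrt hc, sq_nonneg (√a - √c)]
  calc √a * √b + √b * √c = √b * (√a + √c) := by ring
    _ ≤ √b * √(2 * (a + c)) := mul_le_mul_of_nonneg_left hsum (sqrt_nonneg b)
    _ = √(2 * b * (a + c)) := by rw [← sqrt_mul' b (by positivity)]; ring_nf

section SqrtIntegral

variable {X : Type*} [MeasurableSpace X] {μ : Measure X} {u v : X → ℝ}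

lemma memLp_two_sqrt (hu : Integrable u μ) (hu0 : 0 ≤ᵐ[μ] u) : MemLp (fun x => √(u x)) 2 μ := by
  refine (memLp_two_iff_integrable_sq
    (continuous_sqrt.comp_aestronglyMeasurable hu.aestronglyMeasurable)).2 (hu.congr ?_)
  filter_upwards [hu0] with x hx
  rw [sq_sqrt hx]

lemma sqrt_mul_ae_eq (hu0 : 0 ≤ᵐ[μ] u) :
    (fun x => √(u x * v x)) =ᵐ[μ] fun x => √(u x) * √(v x) := by
  filter_upwards [hu0] with x hx
  exact sqrt_mul hx _

lemma integrable_sqrt_mul (hu : Integrable u μ) (hv : Integrable v μ)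
    (hu0 : 0 ≤ᵐ[μ] u) (hv0 : 0 ≤ᵐ[μ] v) : Integrable (fun x => √(u x * v x)) μ :=
  ((memLp_two_sqrt hu hu0).integrable_mul (memLp_two_sqrt hv hv0)).congr (sqrt_mul_ae_eq hu0).symm

lemma integral_sqrt_mul_le (hu : Integrable u μ) (hv : Integrable v μ)
    (hu0 : 0 ≤ᵐ[μ] u) (hv0 : 0 ≤ᵐ[μ] v) :
    ∫ x, √(u x * v x) ∂μ ≤ √(∫ x, u x ∂μ) * √(∫ x, v x ∂μ) := by
  have sq_sqrt_ae {w : X → ℝ} (hw0 : 0 ≤ᵐ[μ] w) :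
      ∫ x, √(w x) ^ (2 : ℝ) ∂μ = ∫ x, w x ∂μ := by
    refine integral_congr_ae ?_
    filter_upwards [hw0] with x hx
    rw [rpow_two, sq_sqrt hx]
  have holder := integral_mul_le_Lp_mul_Lq_of_nonneg (p := 2) (q := 2) (μ := μ)
    (by constructor <;> norm_num) (.of_forall fun x => sqrt_nonneg (u x))
    (.of_forall fun x => sqrt_nonneg (v x)) (by simpa using memLp_two_sqrt hu hu0)
    (by simpa using memLp_two_sqrt hv hv0)
  rwa [sq_sqrt_ae hu0, sq_sqrt_ae hv0, ← sqrt_eq_rpow, ← sqrt_eq_rpow,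
    ← integral_congr_ae (sqrt_mul_ae_eq hu0)] at holder

lemma integral_sqrt_mul_le_of_split (hu : Integrable u μ) (hv : Integrable v μ)
    (hu0 : 0 ≤ᵐ[μ] u) (hv0 : 0 ≤ᵐ[μ] v) {A : Set X} (hA : NullMeasurableSet A μ) {a b c : ℝ}
    (huA : ∫ x in A, u x ∂μ ≤ a) (hvA : ∫ x in A, v x ∂μ ≤ b)
    (huAc : ∫ x in Aᶜ, u x ∂μ ≤ b) (hvAc : ∫ x in Aᶜ, v x ∂μ ≤ c) :
    ∫ x, √(u x * v x) ∂μ ≤ √(2 * b * (a + c)) := by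
  have ha : 0 ≤ a := (integral_nonneg_of_ae (ae_restrict_of_ae hu0)).trans huA
  have hc : 0 ≤ c := (integral_nonneg_of_ae (ae_restrict_of_ae hv0)).trans hvAc
  have on_piece (s : Set X) {a' b' : ℝ} (hu' : ∫ x in s, u x ∂μ ≤ a')
      (hv' : ∫ x in s, v x ∂μ ≤ b') : ∫ x in s, √(u x * v x) ∂μ ≤ √a' * √b' :=
    (integral_sqrt_mul_le hu.restrict hv.restrict (ae_restrict_of_ae hu0)
      (ae_restrict_of_ae hv0)).trans <|
      mul_le_mul (sqrt_le_sqrt hu') (sqrt_le_sqrt hv') (sqrt_nonneg _) (sqrt_nonneg _)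
  rw [← integral_add_compl₀ hA (integrable_sqrt_mul hu hv hu0 hv0)]
  exact (add_le_add (on_piece A huA hvA) (on_piece Aᶜ huAc hvAc)).trans
    (sqrt_mul_sqrt_add_sqrt_mul_sqrt_le ha hc)

end SqrtIntegral

namespace MeasureTheory.Lp

variable {X : Type*} [MeasurableSpace X] {μ : Measure X}

lemma monotone_of_ae_nonneg {p : ENNReal} {T : Lp ℝ p μ →ₗ[ℝ] Lp ℝ p μ}
    (hT : ∀ u : Lp ℝ p μ, (0 : X → ℝ) ≤ᵐ[μ] ⇑u → (0 : X → ℝ) ≤ᵐ[μ] ⇑(T u)) : Monotone T :=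
  (monotone_iff_map_nonneg T).2 fun u hu =>
    (Lp.coeFn_nonneg _).1 (hT u ((Lp.coeFn_nonneg u).2 hu))

variable {T : Lp ℝ 1 μ →ₗ[ℝ] Lp ℝ 1 μ} {g h : X → ℝ}

lemma ae_nonneg_map_toL1 (hT : Monotone T) (hg : Integrable g μ) (hg0 : 0 ≤ᵐ[μ] g) :
    (0 : X → ℝ) ≤ᵐ[μ] ⇑(T (hg.toL1 g)) :=
  (Lp.coeFn_nonneg _).2 <| (monotone_iff_map_nonneg T).1 hT _ <|
    (Lp.coeFn_nonneg _).1 (hg0.trans_eq hg.coeFn_toL1.symm)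

lemma setIntegral_map_toL1_le_integral (hT : Monotone T)
    (hTmass : ∀ u : Lp ℝ 1 μ, ∫ x, T u x ∂μ = ∫ x, u x ∂μ) (hg : Integrable g μ)
    (hg0 : 0 ≤ᵐ[μ] g) (s : Set X) : ∫ x in s, T (hg.toL1 g) x ∂μ ≤ ∫ x, g x ∂μ :=
  (setIntegral_le_integral (L1.integrable_coeFn _) (ae_nonneg_map_toL1 hT hg hg0)).trans <|
    ((hTmass _).trans (integral_congr_ae hg.coeFn_toL1)).le

lemma setIntegral_map_toL1_le_const_mul (hT : Monotone T) (hg : Integrable g μ)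
    (hh : Integrable h μ) {c : ℝ} (hgh : g ≤ᵐ[μ] fun x => c * h x) (s : Set X) :
    ∫ x in s, T (hg.toL1 g) x ∂μ ≤ c * ∫ x in s, T (hh.toL1 h) x ∂μ := by
  have hle : hg.toL1 g ≤ c • hh.toL1 h := by
    refine (Lp.coeFn_le _ _).1 ?_
    filter_upwards [hg.coeFn_toL1, hh.coeFn_toL1, Lp.coeFn_smul c (hh.toL1 h), hgh]
      with x hgx hhx hsmul hx
    rwa [hgx, hsmul, Pi.smul_apply, hhx]
  have hTle : ⇑(T (hg.toL1 g)) ≤ᵐ[μ] fun x => c * T (hh.toL1 h) x := by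
    filter_upwards [(Lp.coeFn_le _ _).2 (hT hle), Lp.coeFn_smul c (T (hh.toL1 h))]
      with x hx hsmul
    rwa [map_smul, hsmul] at hx
  rw [← integral_const_mul]
  exact setIntegral_mono_ae (L1.integrable_coeFn _).restrict
    ((L1.integrable_coeFn _).const_mul c).restrict hTle

end MeasureTheory.Lp

section PositiveNegativeParts

variable {X : Type*} [MeasurableSpace X] {μ : Measure X} {f : X → ℝ} {C : ℝ}

lemma ae_max_zero_le_mul_indicator (hf : ∀ᵐ x ∂μ, |f x| ≤ C) :
    (fun x => max (f x) 0) ≤ᵐ[μ] fun x => C * {x | 0 < f x}.indicator (fun _ => 1) x := by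
  filter_upwards [hf] with x hx
  by_cases h : 0 < f x
  · simpa [h, h.le] using (le_abs_self _).trans hx
  · simp [h, not_lt.1 h]

lemma ae_max_neg_zero_le_mul_indicator (hf : ∀ᵐ x ∂μ, |f x| ≤ C) :
    (fun x => max (-f x) 0) ≤ᵐ[μ] fun x => C * {x | 0 < f x}ᶜ.indicator (fun _ => 1) x := by
  filter_upwards [hf] with x hx
  by_cases h : 0 < f x
  · simp [h, h.le]
  · simpa [h, not_lt.1 h] using (neg_le_abs _).trans hx

end PositiveNegativeParts

theorem stmt7_general {X : Type*} [MeasurableSpace X] (μ : Measure X)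
    (T : Lp ℝ 1 μ →ₗ[ℝ] Lp ℝ 1 μ)
    (hTpos : ∀ u : Lp ℝ 1 μ, (0 : X → ℝ) ≤ᵐ[μ] ⇑u → (0 : X → ℝ) ≤ᵐ[μ] ⇑(T u))
    (hTmass : ∀ u : Lp ℝ 1 μ, ∫ x, (T u) x ∂μ = ∫ x, u x ∂μ)
    (f : X → ℝ) (hfm : MemLp f ⊤ μ)
    (hfp : Integrable (fun x => max (f x) 0) μ)
    (hfn : Integrable (fun x => max (-f x) 0) μ)
    (hχA : Integrable (({x | 0 < f x}).indicator (fun _ => (1 : ℝ))) μ)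
    (hχAc : Integrable ((({x | 0 < f x})ᶜ).indicator (fun _ => (1 : ℝ))) μ)
    (K : ℝ)
    (h1 : ∫ x in {x | 0 < f x}, (T (hχAc.toL1 _)) x ∂μ ≤ K / 2)
    (h2 : ∫ x in ({x | 0 < f x})ᶜ, (T (hχA.toL1 _)) x ∂μ ≤ K / 2) :
    ∫ x, Real.sqrt ((T (hfp.toL1 _)) x * (T (hfn.toL1 _)) x) ∂μ ≤
      Real.sqrt (K * (eLpNorm f ⊤ μ).toReal * ∫ x, |f x| ∂μ) := by
  set C := (eLpNorm f ⊤ μ).toReal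
  have hC : 0 ≤ C := ENNReal.toReal_nonneg
  have hf_le : ∀ᵐ x ∂μ, |f x| ≤ C := by
    simpa [C, toReal_eLpNorm hfm.1] using ae_le_lpNorm_exponent_top hfm
  have hT : Monotone T := Lp.monotone_of_ae_nonneg hTpos
  have hfp0 : 0 ≤ᵐ[μ] fun x => max (f x) 0 := .of_forall fun _ => le_max_right _ _
  have hfn0 : 0 ≤ᵐ[μ] fun x => max (-f x) 0 := .of_forall fun _ => le_max_right _ _
  refine (integral_sqrt_mul_le_of_split (L1.integrable_coeFn _) (L1.integrable_coeFn _)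
    (Lp.ae_nonneg_map_toL1 hT hfp hfp0) (Lp.ae_nonneg_map_toL1 hT hfn hfn0)
    (nullMeasurableSet_lt aemeasurable_const hfm.1.aemeasurable) (A := {x | 0 < f x})
    (Lp.setIntegral_map_toL1_le_integral hT hTmass hfp hfp0 _)
    ((Lp.setIntegral_map_toL1_le_const_mul hT hfn hχAc (ae_max_neg_zero_le_mul_indicator hf_le)
      _).trans (mul_le_mul_of_nonneg_left h1 hC))
    ((Lp.setIntegral_map_toL1_le_const_mul hT hfp hχA (ae_max_zero_le_mul_indicator hf_le)
      _).trans (mul_le_mul_of_nonneg_left h2 hC))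
    (Lp.setIntegral_map_toL1_le_integral hT hTmass hfn hfn0 _)).trans_eq ?_
  rw [← integral_add hfp hfn]
  simp only [max_zero_add_max_neg_zero_eq_abs_self]
  congr 1
  ring

/-- inequality (eq:per_Linfty_funct) of Lemma th:per.
Let `μ` be a finite measure and `T : L¹ → L¹` a linear, positivity-preserving and
mass-preserving operator. Let `f ∈ L∞`, `A = {f > 0}`, and let `K ≥ 0` satisfy
`∫_A T(χ_{X∖A}) dμ ≤ K/2` and `∫_{X∖A} T(χ_A) dμ ≤ K/2`. Then
`∫ √(T(f⁺)·T(f⁻)) dμ ≤ √(K·‖f‖_∞·‖f‖_₁)`. -/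
theorem stmt7 {X : Type*} [MeasurableSpace X] (μ : Measure X) [IsFiniteMeasure μ]
    (T : Lp ℝ 1 μ →ₗ[ℝ] Lp ℝ 1 μ)
    (hTpos : ∀ u : Lp ℝ 1 μ, (0 : X → ℝ) ≤ᵐ[μ] ⇑u → (0 : X → ℝ) ≤ᵐ[μ] ⇑(T u))
    (hTmass : ∀ u : Lp ℝ 1 μ, ∫ x, (T u) x ∂μ = ∫ x, u x ∂μ)
    (f : X → ℝ) (hfm : MemLp f ⊤ μ)
    (hfp : Integrable (fun x => max (f x) 0) μ)
    (hfn : Integrable (fun x => max (-f x) 0) μ)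
    (hχA : Integrable (({x | 0 < f x}).indicator (fun _ => (1 : ℝ))) μ)
    (hχAc : Integrable ((({x | 0 < f x})ᶜ).indicator (fun _ => (1 : ℝ))) μ)
    (K : ℝ) (hK0 : 0 ≤ K)
    (h1 : ∫ x in {x | 0 < f x}, (T (hχAc.toL1 _)) x ∂μ ≤ K / 2)
    (h2 : ∫ x in ({x | 0 < f x})ᶜ, (T (hχA.toL1 _)) x ∂μ ≤ K / 2) :
    ∫ x, Real.sqrt ((T (hfp.toL1 _)) x * (T (hfn.toL1 _)) x) ∂μ ≤
      Real.sqrt (K * (eLpNorm f ⊤ μ).toReal * ∫ x, |f x| ∂μ) :=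
  stmt7_general μ T hTpos hTmass f hfm hfp hfn hχA hχAc K h1 h2
end

section
/- Let (X,d) be a metric space and m a finite Borel measure on X. Let T : L¹(X,m) → L¹(X,m) be a linear operator which is positivity-preserving, mass-preserving (∫ Tu dm = ∫ u dm for all u ∈ L¹), and satisfies the maximum principle (for every constant β ∈ ℝ, u ≤ β a.e. implies Tu ≤ β a.e.). Let c > 0 and let S : L∞(X,m) → L∞(X,m) satisfy ∫_X g·Tu dm = ∫_X (Sg)·u dm for all u ∈ L¹(X,m), g ∈ L∞(X,m), with Sg admitting a Lipschitz representative of Lipschitz constant at most c·‖g‖_{L∞} for every g. Let f ∈ L∞(X,m) and let K ≥ 0 satisfy ‖χ_{{f>0}} − T(χ_{{f>0}})‖_{L¹} ≤ K. Then for every real number W such that ∫_X h·f dm ≤ W for every bounded 1-Lipschitz h : X → ℝ, one has ‖f‖_{L¹} ≤ c·W + 2·√(K·‖f‖_{L∞}·‖f‖_{L¹}). -/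
/-!
Let `χ = 1_{f>0}` and `g = 2χ - 1`, so that `‖f‖₁ = ∫ g f`; testing the hypothesis on `W` with
constants shows `∫ f = 0`. Duality and mass preservation then give `∫ (S g) f = 2 ∫ (S χ) f`,
hence `‖f‖₁ = ∫ (S g) f + 2 ∫ |χ - S χ| |f|`, because `0 ≤ S χ ≤ 1` and `χ - S χ` has the sign
of `f`. The first term is at most `c W`: a truncation of the `c`-Lipschitz representative of
`S g`, divided by `c`, is an admissible test function. For the second, `χ` is `{0,1}`-valued,
so `∫ |χ - u| = ∫ χ + ∫ u - 2 ∫ χ u` for `0 ≤ u ≤ 1`; by duality (and `T 1 = 1`, from the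
maximum principle and mass preservation) the right-hand sides for `u = S χ` and `u = T χ`
agree, so `∫ |χ - S χ| = ‖χ - T χ‖₁ ≤ K`. Cauchy–Schwarz with the weight `|χ - S χ| ≤ 1`
and `f² ≤ ‖f‖_∞ |f|` finishes the proof.
-/

open MeasureTheory Filter Set

theorem le_sqrt_mul_of_forall_two_mul_le {Y P Q : ℝ}
    (h : ∀ a > 0, 2 * a * Y ≤ a ^ 2 * P + Q) : Y ≤ √(P * Q) := by
  rcases le_or_gt Y 0 with hY | hY
  · exact hY.trans (Real.sqrt_nonneg _)
  rcases le_or_gt P 0 with hP | hP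
  · have := h (|Q| / Y + 1) (by positivity)
    have hQ : 2 * (|Q| / Y + 1) * Y = 2 * |Q| + 2 * Y := by field_simp
    linarith [abs_nonneg Q, le_abs_self Q,
      mul_nonpos_of_nonneg_of_nonpos (sq_nonneg (|Q| / Y + 1)) hP]
  · refine Real.le_sqrt_of_sq_le ?_
    have := h (Y / P) (by positivity)
    have e : (Y / P) ^ 2 * P = Y / P * Y := by field_simp
    have : Y / P * Y ≤ Q := by nlinarith
    rw [div_mul_eq_mul_div, div_le_iff₀ hP] at this
    nlinarith

section PosIndicator

variable {X : Type*}

noncomputable def posIndicator (f : X → ℝ) : X → ℝ := {x | 0 < f x}.indicator fun _ => 1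

theorem posIndicator_mem_Icc (f : X → ℝ) (x : X) : posIndicator f x ∈ Icc 0 1 := by
  by_cases hx : 0 < f x <;> simp [posIndicator, hx]

theorem abs_eq_two_mul_posIndicator_sub_one_mul (f : X → ℝ) (x : X) :
    |f x| = (2 * posIndicator f x - 1) * f x := by
  by_cases hx : 0 < f x
  · simp [posIndicator, hx, abs_of_pos hx]
    ring
  · simp [posIndicator, hx, abs_of_nonpos (not_lt.1 hx)]

theorem abs_two_mul_posIndicator_sub_one_le (f : X → ℝ) (x : X) :
    |2 * posIndicator f x - 1| ≤ 1 := by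
  by_cases hx : 0 < f x <;> norm_num [posIndicator, hx]

theorem posIndicator_sub_mul_eq_abs_mul_abs (f : X → ℝ) {s : ℝ} (hs : s ∈ Icc 0 1) (x : X) :
    (posIndicator f x - s) * f x = |posIndicator f x - s| * |f x| := by
  by_cases hx : 0 < f x
  · simp [posIndicator, hx, abs_of_pos hx, abs_of_nonneg (sub_nonneg.2 hs.2)]
  · simp [posIndicator, hx, abs_of_nonpos (not_lt.1 hx), abs_of_nonneg hs.1]

theorem abs_posIndicator_sub (f : X → ℝ) {s : ℝ} (hs : s ∈ Icc 0 1) (x : X) :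
    |posIndicator f x - s| = posIndicator f x + s - 2 * (posIndicator f x * s) := by
  by_cases hx : 0 < f x
  · simp [posIndicator, hx, abs_of_nonneg (sub_nonneg.2 hs.2)]
    ring
  · simp [posIndicator, hx, abs_of_nonneg hs.1]

theorem abs_posIndicator_sub_mem_Icc (f : X → ℝ) {s : ℝ} (hs : s ∈ Icc 0 1) (x : X) :
    |posIndicator f x - s| ∈ Icc 0 1 :=
  ⟨abs_nonneg _, abs_sub_le_of_nonneg_of_le (posIndicator_mem_Icc f x).1
    (posIndicator_mem_Icc f x).2 hs.1 hs.2⟩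

variable [MeasurableSpace X] {μ : Measure X}

theorem memLp_top_posIndicator {f : X → ℝ} (hχ : AEStronglyMeasurable (posIndicator f) μ) :
    MemLp (posIndicator f) ⊤ μ :=
  memLp_top_of_bound hχ 1 (ae_of_all _ fun x => by
    rw [Real.norm_eq_abs, abs_le]
    exact ⟨by linarith [(posIndicator_mem_Icc f x).1], (posIndicator_mem_Icc f x).2⟩)

theorem norm_toLp_two_mul_posIndicator_sub_one_le [IsFiniteMeasure μ] {f : X → ℝ}
    (hg : MemLp (fun x => 2 * posIndicator f x - 1) ⊤ μ) : ‖hg.toLp _‖ ≤ 1 := by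
  refine (Lp.norm_le_of_ae_bound zero_le_one ?_).trans (by simp)
  filter_upwards [hg.coeFn_toLp] with x hx
  rw [hx, Real.norm_eq_abs]
  exact abs_two_mul_posIndicator_sub_one_le f x

theorem integral_abs_posIndicator_sub {f u : X → ℝ} (hχ : Integrable (posIndicator f) μ)
    (hu : Integrable u μ) (hu01 : ∀ᵐ x ∂μ, u x ∈ Icc 0 1) :
    ∫ x, |posIndicator f x - u x| ∂μ =
      ∫ x, posIndicator f x ∂μ + ∫ x, u x ∂μ - 2 * ∫ x, posIndicator f x * u x ∂μ := by
  have hχu : Integrable (fun x => posIndicator f x * u x) μ :=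
    hu.mul_of_top_right (memLp_top_posIndicator hχ.1)
  rw [integral_congr_ae (hu01.mono fun x hx => abs_posIndicator_sub f hx x),
    integral_sub (f := fun x => posIndicator f x + u x) (hχ.add hu) (hχu.const_mul 2),
    integral_add hχ hu, integral_const_mul]

end PosIndicator

section Integral

variable {X : Type*} [MeasurableSpace X] {μ : Measure X}

theorem ae_abs_le_toReal_eLpNorm_top {f : X → ℝ} (hf : MemLp f ⊤ μ) :
    ∀ᵐ x ∂μ, |f x| ≤ (eLpNorm f ⊤ μ).toReal := by
  filter_upwards [ae_le_lpNorm_exponent_top hf] with x hx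
  rwa [toReal_eLpNorm hf.1, ← Real.norm_eq_abs]

theorem integral_mul_abs_le_sqrt {w f : X → ℝ} {M : ℝ} (hw : Integrable w μ)
    (hw01 : ∀ᵐ x ∂μ, w x ∈ Icc 0 1) (hf : Integrable f μ) (hfM : ∀ᵐ x ∂μ, |f x| ≤ M) :
    ∫ x, w x * |f x| ∂μ ≤ √((∫ x, w x ∂μ) * (M * ∫ x, |f x| ∂μ)) := by
  have hwf : Integrable (fun x => w x * |f x|) μ :=
    hf.abs.bdd_mul hw.1 (hw01.mono fun x hx => by
      rw [Real.norm_eq_abs, abs_of_nonneg hx.1]; exact hx.2)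
  refine le_sqrt_mul_of_forall_two_mul_le fun a _ => ?_
  have hpt : ∀ᵐ x ∂μ, 2 * a * (w x * |f x|) ≤ a ^ 2 * w x + M * |f x| := by
    filter_upwards [hw01, hfM] with x ⟨h0, h1⟩ hx
    nlinarith [mul_nonneg h0 (sq_nonneg (a - |f x|)), sq_abs (f x),
      mul_le_mul_of_nonneg_right hx (abs_nonneg (f x)),
      mul_le_of_le_one_left (sq_nonneg (f x)) h1]
  have := integral_mono_ae (hwf.const_mul _) ((hw.const_mul _).add (hf.abs.const_mul M)) hpt
  simp only [Pi.add_apply] at this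
  rwa [integral_add (hw.const_mul _) (hf.abs.const_mul M), integral_const_mul,
    integral_const_mul, integral_const_mul] at this

variable [MetricSpace X]

theorem integral_eq_zero_of_forall_lipschitz_le {f : X → ℝ} {W : ℝ}
    (hW : ∀ h : X → ℝ, (∃ C : ℝ, ∀ x, |h x| ≤ C) → (∀ x y, |h x - h y| ≤ dist x y) →
      ∫ x, h x * f x ∂μ ≤ W) :
    ∫ x, f x ∂μ = 0 := by
  have hconst : ∀ a : ℝ, a * ∫ x, f x ∂μ ≤ W := fun a => by
    simpa [integral_const_mul] using hW (fun _ => a) ⟨|a|, fun _ => le_rfl⟩ (by simp)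
  by_contra hne
  have := hconst ((W + 1) / ∫ x, f x ∂μ)
  rw [div_mul_cancel₀ _ hne] at this
  linarith

theorem integral_mul_le_of_lipschitz {f φ h : X → ℝ} {W L : ℝ}
    (hW : ∀ h : X → ℝ, (∃ C : ℝ, ∀ x, |h x| ≤ C) → (∀ x y, |h x - h y| ≤ dist x y) →
      ∫ x, h x * f x ∂μ ≤ W)
    (hL : 0 < L) (hh : ∀ x y, |h x - h y| ≤ L * dist x y) (hφ : MemLp φ ⊤ μ)
    (hφh : φ =ᵐ[μ] h) :
    ∫ x, φ x * f x ∂μ ≤ L * W := by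
  set N := lpNorm φ ⊤ μ
  have hN : -N ≤ N := neg_le_self lpNorm_nonneg
  -- Truncating at the essential bound of `φ` makes `h` bounded without changing it a.e.
  set h' : X → ℝ := fun x => projIcc (-N) N hN (h x) / L
  have hbdd : ∀ x, |h' x| ≤ N / L := fun x => by
    rw [abs_div, abs_of_pos hL]
    gcongr
    exact abs_le.2 (projIcc (-N) N hN (h x)).2
  have hlip : ∀ x y, |h' x - h' y| ≤ dist x y := fun x y => by
    rw [← sub_div, abs_div, abs_of_pos hL, div_le_iff₀ hL, mul_comm]
    exact (abs_projIcc_sub_projIcc hN).trans (hh x y)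
  have hφh' : ∀ᵐ x ∂μ, φ x * f x = L * (h' x * f x) := by
    filter_upwards [hφh, ae_le_lpNorm_exponent_top hφ] with x hx hxN
    rw [Real.norm_eq_abs, hx] at hxN
    simp only [h', hx, projIcc_of_mem hN (abs_le.1 hxN)]
    field_simp
  calc ∫ x, φ x * f x ∂μ = L * ∫ x, h' x * f x ∂μ := by
        rw [integral_congr_ae hφh', integral_const_mul]
    _ ≤ L * W := mul_le_mul_of_nonneg_left (hW h' ⟨_, hbdd⟩ hlip) hL.le

end Integral

section Operators

variable {X : Type*} [MeasurableSpace X] {μ : Measure X}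

def PositivityPreserving (T : Lp ℝ 1 μ → Lp ℝ 1 μ) : Prop :=
  ∀ u : Lp ℝ 1 μ, (0 : X → ℝ) ≤ᵐ[μ] ⇑u → (0 : X → ℝ) ≤ᵐ[μ] ⇑(T u)

def MassPreserving (T : Lp ℝ 1 μ → Lp ℝ 1 μ) : Prop :=
  ∀ u : Lp ℝ 1 μ, ∫ x, (T u) x ∂μ = ∫ x, u x ∂μ

def SatisfiesMaximumPrinciple (T : Lp ℝ 1 μ → Lp ℝ 1 μ) : Prop :=
  ∀ (β : ℝ) (u : Lp ℝ 1 μ), ⇑u ≤ᵐ[μ] (fun _ => β) → ⇑(T u) ≤ᵐ[μ] (fun _ => β)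

def IsDualPair (T : Lp ℝ 1 μ → Lp ℝ 1 μ) (S : Lp ℝ ⊤ μ → Lp ℝ ⊤ μ) : Prop :=
  ∀ (u : Lp ℝ 1 μ) (g : Lp ℝ ⊤ μ), ∫ x, g x * (T u) x ∂μ = ∫ x, (S g) x * u x ∂μ

variable {T : Lp ℝ 1 μ → Lp ℝ 1 μ} {S : Lp ℝ ⊤ μ → Lp ℝ ⊤ μ}

theorem IsDualPair.integral_mul_apply_toL1 (hadj : IsDualPair T S) {φ u : X → ℝ}
    (hφ : MemLp φ ⊤ μ) (hu : Integrable u μ) :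
    ∫ x, φ x * T (hu.toL1 u) x ∂μ = ∫ x, S (hφ.toLp φ) x * u x ∂μ :=
  calc ∫ x, φ x * T (hu.toL1 u) x ∂μ = ∫ x, hφ.toLp φ x * T (hu.toL1 u) x ∂μ :=
        integral_congr_ae (by filter_upwards [hφ.coeFn_toLp] with x hx; rw [hx])
    _ = ∫ x, S (hφ.toLp φ) x * hu.toL1 u x ∂μ := hadj _ _
    _ = ∫ x, S (hφ.toLp φ) x * u x ∂μ :=
        integral_congr_ae (by filter_upwards [hu.coeFn_toL1] with x hx; rw [hx])

theorem ae_mem_Icc_apply (hTpos : PositivityPreserving T) (hTmax : SatisfiesMaximumPrinciple T)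
    {u : Lp ℝ 1 μ} (hu : ∀ᵐ x ∂μ, u x ∈ Icc 0 1) :
    ∀ᵐ x ∂μ, T u x ∈ Icc 0 1 := by
  filter_upwards [hTpos u (hu.mono fun _ hx => hx.1), hTmax 1 u (hu.mono fun _ hx => hx.2)]
    with x h0 h1
  exact ⟨h0, h1⟩

theorem apply_toL1_one_ae_eq [IsFiniteMeasure μ] (hTmass : MassPreserving T)
    (hTmax : SatisfiesMaximumPrinciple T) :
    ⇑(T ((integrable_const (1 : ℝ)).toL1 _)) =ᵐ[μ] fun _ => 1 := by
  have hone := (integrable_const (1 : ℝ) (μ := μ)).coeFn_toL1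
  refine (integral_eq_iff_of_ae_le (L1.integrable_coeFn _) (integrable_const 1)
    (hTmax 1 _ hone.le)).1 ?_
  rw [hTmass, integral_congr_ae hone]

theorem integral_adjoint_eq [IsFiniteMeasure μ] (hTmass : MassPreserving T)
    (hTmax : SatisfiesMaximumPrinciple T) (hadj : IsDualPair T S) {φ : X → ℝ}
    (hφ : MemLp φ ⊤ μ) :
    ∫ x, S (hφ.toLp φ) x ∂μ = ∫ x, φ x ∂μ :=
  calc ∫ x, S (hφ.toLp φ) x ∂μ = ∫ x, S (hφ.toLp φ) x * 1 ∂μ := by simp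
    _ = ∫ x, φ x * T ((integrable_const (1 : ℝ)).toL1 _) x ∂μ :=
        (hadj.integral_mul_apply_toL1 hφ (integrable_const 1)).symm
    _ = ∫ x, φ x ∂μ := integral_congr_ae <| by
        filter_upwards [apply_toL1_one_ae_eq hTmass hTmax] with x hx
        rw [hx, mul_one]

theorem ae_mem_Icc_adjoint [IsFiniteMeasure μ] (hTpos : PositivityPreserving T)
    (hTmass : MassPreserving T) (hadj : IsDualPair T S) {φ : X → ℝ} (hφ : MemLp φ ⊤ μ)
    (hφ01 : ∀ᵐ x ∂μ, φ x ∈ Icc 0 1) :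
    ∀ᵐ x ∂μ, S (hφ.toLp φ) x ∈ Icc 0 1 := by
  have hSφ : Integrable (S (hφ.toLp φ)) μ := (Lp.memLp _).integrable le_top
  have hdual : ∀ E, MeasurableSet E → ∃ v : Lp ℝ 1 μ, (0 : X → ℝ) ≤ᵐ[μ] ⇑(T v) ∧
      ∫ x, T v x ∂μ = ∫ x in E, (1 : ℝ) ∂μ ∧
      ∫ x in E, S (hφ.toLp φ) x ∂μ = ∫ x, φ x * T v x ∂μ := by
    intro E hE
    have h1E := (integrable_const (1 : ℝ) (μ := μ)).indicator hE
    refine ⟨h1E.toL1 _, hTpos _ ?_, ?_, ?_⟩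
    · filter_upwards [h1E.coeFn_toL1] with x hx
      rw [hx]
      exact indicator_nonneg (fun _ _ => zero_le_one) x
    · rw [hTmass, integral_congr_ae h1E.coeFn_toL1, integral_indicator hE]
    · rw [hadj.integral_mul_apply_toL1 hφ h1E, ← integral_indicator hE]
      congr 1 with x
      by_cases hx : x ∈ E <;> simp [hx]
  have hint : ∀ v : Lp ℝ 1 μ, Integrable (fun x => φ x * T v x) μ := fun v =>
    (L1.integrable_coeFn _).bdd_mul hφ.1 (hφ01.mono fun x hx => by
      rw [Real.norm_eq_abs, abs_of_nonneg hx.1]; exact hx.2)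
  have hnonneg : 0 ≤ᵐ[μ] ⇑(S (hφ.toLp φ)) :=
    ae_nonneg_of_forall_setIntegral_nonneg hSφ fun E hE _ => by
      obtain ⟨v, hv, -, hSv⟩ := hdual E hE
      rw [hSv]
      exact integral_nonneg_of_ae (by
        filter_upwards [hφ01, hv] with x hx hvx
        exact mul_nonneg hx.1 hvx)
  have hle : ⇑(S (hφ.toLp φ)) ≤ᵐ[μ] fun _ => 1 :=
    ae_le_of_forall_setIntegral_le hSφ (integrable_const 1) fun E hE _ => by
      obtain ⟨v, hv, hmass, hSv⟩ := hdual E hE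
      rw [hSv, ← hmass]
      exact integral_mono_ae (hint v) (L1.integrable_coeFn _) (by
        filter_upwards [hφ01, hv] with x hx hvx
        exact mul_le_of_le_one_left hvx hx.2)
  filter_upwards [hnonneg, hle] with x h0 h1
  exact ⟨h0, h1⟩

theorem integral_abs_posIndicator_sub_adjoint [IsFiniteMeasure μ]
    (hTpos : PositivityPreserving T) (hTmass : MassPreserving T)
    (hTmax : SatisfiesMaximumPrinciple T) (hadj : IsDualPair T S)
    {f : X → ℝ} (hχ : Integrable (posIndicator f) μ) :
    ∫ x, |posIndicator f x - S ((memLp_top_posIndicator hχ.1).toLp _) x| ∂μ =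
      ∫ x, |posIndicator f x - T (hχ.toL1 _) x| ∂μ := by
  have hχ' := memLp_top_posIndicator hχ.1
  have hχ01 : ∀ᵐ x ∂μ, hχ.toL1 _ x ∈ Icc 0 1 := by
    filter_upwards [hχ.coeFn_toL1] with x hx
    exact hx ▸ posIndicator_mem_Icc f x
  rw [integral_abs_posIndicator_sub hχ ((Lp.memLp _).integrable le_top)
      (ae_mem_Icc_adjoint hTpos hTmass hadj hχ' (ae_of_all μ (posIndicator_mem_Icc f))),
    integral_abs_posIndicator_sub hχ (L1.integrable_coeFn _) (ae_mem_Icc_apply hTpos hTmax hχ01),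
    integral_adjoint_eq hTmass hTmax hadj, hTmass, integral_congr_ae hχ.coeFn_toL1,
    hadj.integral_mul_apply_toL1 hχ' hχ]
  simp_rw [mul_comm]

theorem integral_abs_eq_adjoint_add (hTmass : MassPreserving T) (hadj : IsDualPair T S)
    {f : X → ℝ} (hf : Integrable f μ) (hf0 : ∫ x, f x ∂μ = 0)
    (hχ : MemLp (posIndicator f) ⊤ μ) (hg : MemLp (fun x => 2 * posIndicator f x - 1) ⊤ μ)
    (hs01 : ∀ᵐ x ∂μ, S (hχ.toLp _) x ∈ Icc 0 1) :
    ∫ x, |f x| ∂μ = ∫ x, S (hg.toLp _) x * f x ∂μ +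
      2 * ∫ x, |posIndicator f x - S (hχ.toLp _) x| * |f x| ∂μ := by
  have hTf : ∫ x, T (hf.toL1 f) x ∂μ = 0 := by
    rw [hTmass, integral_congr_ae hf.coeFn_toL1, hf0]
  have hχf : Integrable (fun x => posIndicator f x * f x) μ := hf.mul_of_top_right hχ
  have hsf : Integrable (fun x => S (hχ.toLp _) x * f x) μ := hf.mul_of_top_right (Lp.memLp _)
  have hχTf : Integrable (fun x => posIndicator f x * T (hf.toL1 f) x) μ :=
    (L1.integrable_coeFn _).mul_of_top_right hχ
  have habs : ∫ x, |f x| ∂μ = 2 * ∫ x, posIndicator f x * f x ∂μ := by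
    simp_rw [abs_eq_two_mul_posIndicator_sub_one_mul f, sub_mul, one_mul, mul_assoc]
    rw [integral_sub (hχf.const_mul 2) hf, integral_const_mul, hf0, sub_zero]
  have hSg : ∫ x, S (hg.toLp _) x * f x ∂μ = 2 * ∫ x, S (hχ.toLp _) x * f x ∂μ := by
    rw [← hadj.integral_mul_apply_toL1 hg hf, ← hadj.integral_mul_apply_toL1 hχ hf]
    simp_rw [sub_mul, one_mul, mul_assoc]
    rw [integral_sub (hχTf.const_mul 2) (L1.integrable_coeFn _), integral_const_mul, hTf,
      sub_zero]
  have hw : ∫ x, |posIndicator f x - S (hχ.toLp _) x| * |f x| ∂μ =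
      ∫ x, posIndicator f x * f x ∂μ - ∫ x, S (hχ.toLp _) x * f x ∂μ := by
    rw [← integral_sub hχf hsf]
    refine integral_congr_ae ?_
    filter_upwards [hs01] with x hx
    rw [← posIndicator_sub_mul_eq_abs_mul_abs f hx, sub_mul]
  linarith

end Operators

theorem stmt8_general {X : Type*} [MetricSpace X] [MeasurableSpace X]
    (μ : Measure X) [IsFiniteMeasure μ]
    (T : Lp ℝ 1 μ →ₗ[ℝ] Lp ℝ 1 μ)
    (hTpos : ∀ u : Lp ℝ 1 μ, (0 : X → ℝ) ≤ᵐ[μ] ⇑u → (0 : X → ℝ) ≤ᵐ[μ] ⇑(T u))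
    (hTmass : ∀ u : Lp ℝ 1 μ, ∫ x, (T u) x ∂μ = ∫ x, u x ∂μ)
    (hTmax : ∀ (β : ℝ) (u : Lp ℝ 1 μ),
      ⇑u ≤ᵐ[μ] (fun _ => β) → ⇑(T u) ≤ᵐ[μ] (fun _ => β))
    (c : ℝ) (hc : 0 < c)
    (S : Lp ℝ ⊤ μ → Lp ℝ ⊤ μ)
    (hadj : ∀ (u : Lp ℝ 1 μ) (g : Lp ℝ ⊤ μ),
      ∫ x, g x * (T u) x ∂μ = ∫ x, (S g) x * u x ∂μ)
    (hSlip : ∀ g : Lp ℝ ⊤ μ, ∃ h : X → ℝ,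
      (∀ x y, |h x - h y| ≤ c * ‖g‖ * dist x y) ∧ ⇑(S g) =ᵐ[μ] h)
    (f : X → ℝ) (hfm : MemLp f ⊤ μ) (hf1 : Integrable f μ)
    (hχA : Integrable (({x | 0 < f x}).indicator (fun _ => (1 : ℝ))) μ)
    (K : ℝ)
    (hK : ∫ x, |({x | 0 < f x}).indicator (fun _ => (1 : ℝ)) x - (T (hχA.toL1 _)) x| ∂μ ≤ K)
    (W : ℝ)
    (hW : ∀ h : X → ℝ, (∃ Cb : ℝ, ∀ x, |h x| ≤ Cb) →
      (∀ x y, |h x - h y| ≤ dist x y) → ∫ x, h x * f x ∂μ ≤ W) :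
    ∫ x, |f x| ∂μ ≤ c * W +
      2 * Real.sqrt (K * (eLpNorm f ⊤ μ).toReal * ∫ x, |f x| ∂μ) := by
  have hχ : MemLp (posIndicator f) ⊤ μ := memLp_top_posIndicator hχA.1
  have hg : MemLp (fun x => 2 * posIndicator f x - 1) ⊤ μ :=
    (hχ.const_mul 2).sub (memLp_top_const 1)
  have hs01 := ae_mem_Icc_adjoint hTpos hTmass hadj hχ (ae_of_all μ (posIndicator_mem_Icc f))
  have hSg : ∫ x, S (hg.toLp _) x * f x ∂μ ≤ c * W := by
    obtain ⟨h, hh, hSgh⟩ := hSlip (hg.toLp _)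
    refine integral_mul_le_of_lipschitz hW hc (fun x y => (hh x y).trans ?_) (Lp.memLp _) hSgh
    have := mul_le_of_le_one_right hc.le (norm_toLp_two_mul_posIndicator_sub_one_le hg)
    exact mul_le_mul_of_nonneg_right this dist_nonneg
  have hw : ∫ x, |posIndicator f x - S (hχ.toLp _) x| ∂μ ≤ K :=
    (integral_abs_posIndicator_sub_adjoint hTpos hTmass hTmax hadj hχA).trans_le hK
  calc ∫ x, |f x| ∂μ = ∫ x, S (hg.toLp _) x * f x ∂μ +
        2 * ∫ x, |posIndicator f x - S (hχ.toLp _) x| * |f x| ∂μ :=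
        integral_abs_eq_adjoint_add hTmass hadj hf1
          (integral_eq_zero_of_forall_lipschitz_le hW) hχ hg hs01
    _ ≤ c * W + 2 * √((∫ x, |posIndicator f x - S (hχ.toLp _) x| ∂μ) *
        ((eLpNorm f ⊤ μ).toReal * ∫ x, |f x| ∂μ)) := by
        gcongr
        exact integral_mul_abs_le_sqrt (hχA.sub ((Lp.memLp _).integrable le_top)).abs
          (hs01.mono fun x hx => abs_posIndicator_sub_mem_Icc f hx x) hf1
          (ae_abs_le_toReal_eLpNorm_top hfm)
    _ ≤ c * W + 2 * √(K * (eLpNorm f ⊤ μ).toReal * ∫ x, |f x| ∂μ) := by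
        rw [mul_assoc K]
        gcongr

/-- Theorem th:impl_indet, implicit indeterminacy estimate.
Let `μ` be a finite Borel measure on a metric space, `T : L¹ → L¹` linear,
positivity-preserving, mass-preserving and satisfying the maximum principle, and
`S : L∞ → L∞` its adjoint with the `L∞`-to-Lipschitz property with constant `c`.
Let `f ∈ L∞` and `K ≥ 0` with `‖χ_{{f>0}} − T(χ_{{f>0}})‖_{L¹} ≤ K`. Then for every
upper bound `W` of `∫ h·f dμ` over bounded `1`-Lipschitz `h`, one has
`‖f‖_{L¹} ≤ c·W + 2·√(K·‖f‖_∞·‖f‖_₁)`. -/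
theorem stmt8 {X : Type*} [MetricSpace X] [MeasurableSpace X] [BorelSpace X]
    (μ : Measure X) [IsFiniteMeasure μ]
    (T : Lp ℝ 1 μ →ₗ[ℝ] Lp ℝ 1 μ)
    (hTpos : ∀ u : Lp ℝ 1 μ, (0 : X → ℝ) ≤ᵐ[μ] ⇑u → (0 : X → ℝ) ≤ᵐ[μ] ⇑(T u))
    (hTmass : ∀ u : Lp ℝ 1 μ, ∫ x, (T u) x ∂μ = ∫ x, u x ∂μ)
    (hTmax : ∀ (β : ℝ) (u : Lp ℝ 1 μ),
      ⇑u ≤ᵐ[μ] (fun _ => β) → ⇑(T u) ≤ᵐ[μ] (fun _ => β))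
    (c : ℝ) (hc : 0 < c)
    (S : Lp ℝ ⊤ μ → Lp ℝ ⊤ μ)
    (hadj : ∀ (u : Lp ℝ 1 μ) (g : Lp ℝ ⊤ μ),
      ∫ x, g x * (T u) x ∂μ = ∫ x, (S g) x * u x ∂μ)
    (hSlip : ∀ g : Lp ℝ ⊤ μ, ∃ h : X → ℝ,
      (∀ x y, |h x - h y| ≤ c * ‖g‖ * dist x y) ∧ ⇑(S g) =ᵐ[μ] h)
    (f : X → ℝ) (hfm : MemLp f ⊤ μ) (hf1 : Integrable f μ)
    (hχA : Integrable (({x | 0 < f x}).indicator (fun _ => (1 : ℝ))) μ)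
    (K : ℝ) (hK0 : 0 ≤ K)
    (hK : ∫ x, |({x | 0 < f x}).indicator (fun _ => (1 : ℝ)) x - (T (hχA.toL1 _)) x| ∂μ ≤ K)
    (W : ℝ)
    (hW : ∀ h : X → ℝ, (∃ Cb : ℝ, ∀ x, |h x| ≤ Cb) →
      (∀ x y, |h x - h y| ≤ dist x y) → ∫ x, h x * f x ∂μ ≤ W) :
    ∫ x, |f x| ∂μ ≤ c * W +
      2 * Real.sqrt (K * (eLpNorm f ⊤ μ).toReal * ∫ x, |f x| ∂μ) :=
  stmt8_general μ T hTpos hTmass hTmax c hc S hadj hSlip f hfm hf1 hχA K hK W hW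
end

section
/- Let (X,d) be a metric space and m a finite Borel measure on X. Let T : L¹(X,m) → L¹(X,m) be a linear operator which is positivity-preserving, mass-preserving (∫ Tu dm = ∫ u dm for all u ∈ L¹), and satisfies the maximum principle (for every constant β ∈ ℝ, u ≤ β a.e. implies Tu ≤ β a.e.). Let f ∈ L∞(X,m), λ > 0 and t > 0 be such that Tf = e^{−λt}·f m-a.e., and let K ≥ 0 satisfy ‖χ_{{f>0}} − T(χ_{{f>0}})‖_{L¹} ≤ K. Then K·‖f‖_{L∞} ≥ ((1 − e^{−λt})²/4)·‖f‖_{L¹}. -/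
/-!
Write `p = e^{-λt} < 1`, `M = ‖f‖_∞`, `A = {f > 0}` and `χ = χ_A`. Mass preservation and
`Tf = p f` force `∫ f = 0`, so `‖f‖₁ = 2 ∫ f⁺`. Since `f⁺ ≤ M χ` and `f⁻ ≤ M (1 - χ)`, positivity
and the maximum principle give `T f⁺ ≤ M Tχ` and `T f⁻ ≤ M (1 - Tχ)`; together with
`T f⁺ = p f + T f⁻` this yields `T f⁺ ≤ p f⁺ + M |χ - Tχ|` pointwise. Integrating,
`(1 - p) ∫ f⁺ ≤ M K`, which is stronger than the claim.
-/

open MeasureTheory Filter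

theorem max_zero_le_mul_ite_of_abs_le {y M : ℝ} (hy : |y| ≤ M) :
    max y 0 ≤ M * (if 0 < y then 1 else 0) ∧
      max (-y) 0 ≤ M * (1 - if 0 < y then 1 else 0) := by
  obtain ⟨hyl, hyu⟩ := abs_le.mp hy
  split_ifs with hpos <;>
    refine ⟨?_, ?_⟩ <;> simp only [mul_one, mul_zero, sub_zero, sub_self] <;>
    apply max_le <;> linarith

theorem le_mul_max_add_mul_abs_ite {y M p a b c : ℝ} (hy : |y| ≤ M) (hc : c ≤ M * a)
    (hb : b ≤ M * (1 - a)) (hcb : c = p * y + b) :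
    c ≤ p * max y 0 + M * |(if 0 < y then 1 else 0) - a| := by
  have hM : 0 ≤ M := (abs_nonneg y).trans hy
  split_ifs with hpos
  · rw [max_eq_left hpos.le]
    nlinarith [mul_le_mul_of_nonneg_left (le_abs_self (1 - a)) hM]
  · rw [max_eq_right (not_lt.mp hpos), zero_sub, abs_neg]
    nlinarith [mul_le_mul_of_nonneg_left (le_abs_self a) hM]

section PositiveOperator

variable {X : Type*} [MeasurableSpace X] {μ : Measure X} {T : Lp ℝ 1 μ →ₗ[ℝ] Lp ℝ 1 μ}

theorem integral_abs_eq_two_mul_integral_max_sub {f : X → ℝ} (hf : Integrable f μ) :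
    ∫ x, |f x| ∂μ = 2 * ∫ x, max (f x) 0 ∂μ - ∫ x, f x ∂μ := by
  have habs : (fun x => |f x|) = fun x => 2 * max (f x) 0 - f x := by
    funext x
    linarith [max_zero_add_max_neg_zero_eq_abs_self (f x), max_zero_sub_eq_self (f x)]
  rw [habs, integral_sub (hf.pos_part.const_mul 2) hf, integral_const_mul]

theorem integral_eq_zero_of_map_toL1_eq_const_mul
    (hTmass : ∀ u : Lp ℝ 1 μ, ∫ x, (T u) x ∂μ = ∫ x, u x ∂μ)
    {f : X → ℝ} (hf : Integrable f μ) {c : ℝ} (hc : c ≠ 1)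
    (heig : ⇑(T (hf.toL1 f)) =ᵐ[μ] fun x => c * f x) :
    ∫ x, f x ∂μ = 0 := by
  have hfix : c * ∫ x, f x ∂μ = ∫ x, f x ∂μ := by
    rw [← integral_const_mul, ← integral_congr_ae heig, hTmass,
      integral_congr_ae hf.coeFn_toL1]
  have : (c - 1) * ∫ x, f x ∂μ = 0 := by linarith
  exact (mul_eq_zero.mp this).resolve_left (sub_ne_zero.mpr hc)

variable (hTpos : ∀ u : Lp ℝ 1 μ, (0 : X → ℝ) ≤ᵐ[μ] ⇑u → (0 : X → ℝ) ≤ᵐ[μ] ⇑(T u))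
include hTpos

theorem ae_le_map_of_ae_le {u v : Lp ℝ 1 μ} (h : ⇑u ≤ᵐ[μ] ⇑v) : ⇑(T u) ≤ᵐ[μ] ⇑(T v) := by
  have hsub := hTpos (v - u) <| by
    filter_upwards [Lp.coeFn_sub v u, h] with x hx hle
    rw [Pi.zero_apply, hx, Pi.sub_apply, sub_nonneg]
    exact hle
  rw [map_sub] at hsub
  filter_upwards [hsub, Lp.coeFn_sub (T v) (T u)] with x hx hsubx
  rwa [Pi.zero_apply, hsubx, Pi.sub_apply, sub_nonneg] at hx

theorem ae_le_const_mul_map_of_ae_le {u v : Lp ℝ 1 μ} {c : ℝ}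
    (h : ⇑u ≤ᵐ[μ] fun x => c * v x) : ⇑(T u) ≤ᵐ[μ] fun x => c * T v x := by
  have hle := ae_le_map_of_ae_le hTpos (u := u) (v := c • v) <| by
    filter_upwards [h, Lp.coeFn_smul c v] with x hx hcx
    simpa [hcx] using hx
  rw [map_smul] at hle
  filter_upwards [hle, Lp.coeFn_smul c (T v)] with x hx hcx
  simpa [hcx] using hx

theorem map_toL1_max_zero_ae_le [IsFiniteMeasure μ]
    (hTmax : ∀ (β : ℝ) (u : Lp ℝ 1 μ), ⇑u ≤ᵐ[μ] (fun _ => β) → ⇑(T u) ≤ᵐ[μ] (fun _ => β))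
    {f : X → ℝ} (hf : Integrable f μ) {M p : ℝ} (hM : ∀ᵐ x ∂μ, |f x| ≤ M)
    (heig : ⇑(T (hf.toL1 f)) =ᵐ[μ] fun x => p * f x)
    (hχ : Integrable (({x | 0 < f x}).indicator (fun _ => (1 : ℝ))) μ) :
    ⇑(T (hf.pos_part.toL1 _)) ≤ᵐ[μ] fun x =>
      p * max (f x) 0 + M * |({x | 0 < f x}).indicator (fun _ => (1 : ℝ)) x - T (hχ.toL1 _) x| := by
  have hone := integrable_const (μ := μ) (1 : ℝ)
  have hfpos := hf.pos_part
  have hfneg : Integrable (fun x => max (-f x) 0) μ := hf.neg.pos_part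
  have hχ_eq : ∀ x, ({x | 0 < f x}).indicator (fun _ => (1 : ℝ)) x = if 0 < f x then 1 else 0 :=
    fun x => by simp only [Set.indicator_apply, Set.mem_ofPred_eq]
  have hpos_le : ⇑(T (hfpos.toL1 _)) ≤ᵐ[μ] fun x => M * T (hχ.toL1 _) x := by
    refine ae_le_const_mul_map_of_ae_le hTpos ?_
    filter_upwards [hfpos.coeFn_toL1, hχ.coeFn_toL1, hM] with x hfx hχx hx
    rw [hfx, hχx, hχ_eq]
    exact (max_zero_le_mul_ite_of_abs_le hx).1
  have hneg_le : ⇑(T (hfneg.toL1 _)) ≤ᵐ[μ]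
      fun x => M * T (hone.toL1 _ - hχ.toL1 _) x := by
    refine ae_le_const_mul_map_of_ae_le hTpos ?_
    filter_upwards [hfneg.coeFn_toL1, Lp.coeFn_sub (hone.toL1 _) (hχ.toL1 _), hone.coeFn_toL1,
      hχ.coeFn_toL1, hM] with x hfx hsub h1x hχx hx
    rw [hfx, hsub, Pi.sub_apply, h1x, hχx, hχ_eq]
    exact (max_zero_le_mul_ite_of_abs_le hx).2
  have hsplit : hfpos.toL1 _ = hf.toL1 f + hfneg.toL1 _ := by
    refine Lp.ext ?_
    filter_upwards [hfpos.coeFn_toL1, hf.coeFn_toL1, hfneg.coeFn_toL1,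
      Lp.coeFn_add (hf.toL1 f) (hfneg.toL1 _)] with x hposx hfx hnegx hadd
    rw [hposx, hadd, Pi.add_apply, hfx, hnegx]
    linarith [max_zero_sub_eq_self (f x)]
  rw [map_sub] at hneg_le
  have hone_le := hTmax 1 (hone.toL1 _) hone.coeFn_toL1.le
  filter_upwards [hpos_le, hneg_le, hone_le, Lp.coeFn_sub (T (hone.toL1 _)) (T (hχ.toL1 _)),
    Lp.coeFn_add (T (hf.toL1 f)) (T (hfneg.toL1 _)), heig, hM] with x hposx hnegx honex hsub hadd
    heigx hx
  rw [hsub, Pi.sub_apply] at hnegx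
  have hM0 : 0 ≤ M := (abs_nonneg _).trans hx
  rw [hχ_eq]
  refine le_mul_max_add_mul_abs_ite hx hposx
    (hnegx.trans (by nlinarith [mul_le_mul_of_nonneg_left honex hM0])) ?_
  rw [hsplit, map_add, hadd, Pi.add_apply, heigx]

theorem one_sub_mul_integral_max_zero_le [IsFiniteMeasure μ]
    (hTmass : ∀ u : Lp ℝ 1 μ, ∫ x, (T u) x ∂μ = ∫ x, u x ∂μ)
    (hTmax : ∀ (β : ℝ) (u : Lp ℝ 1 μ), ⇑u ≤ᵐ[μ] (fun _ => β) → ⇑(T u) ≤ᵐ[μ] (fun _ => β))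
    {f : X → ℝ} (hf : Integrable f μ) {M p : ℝ} (hM : ∀ᵐ x ∂μ, |f x| ≤ M)
    (heig : ⇑(T (hf.toL1 f)) =ᵐ[μ] fun x => p * f x)
    (hχ : Integrable (({x | 0 < f x}).indicator (fun _ => (1 : ℝ))) μ) :
    (1 - p) * ∫ x, max (f x) 0 ∂μ ≤
      M * ∫ x, |({x | 0 < f x}).indicator (fun _ => (1 : ℝ)) x - T (hχ.toL1 _) x| ∂μ := by
  set χ := ({x | 0 < f x}).indicator (fun _ => (1 : ℝ))
  have hdefect : Integrable (fun x => M * |χ x - T (hχ.toL1 _) x|) μ :=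
    (hχ.sub (L1.integrable_coeFn (T (hχ.toL1 _)))).abs.const_mul M
  have hle : ∫ x, T (hf.pos_part.toL1 _) x ∂μ ≤
      ∫ x, (p * max (f x) 0 + M * |χ x - T (hχ.toL1 _) x|) ∂μ :=
    integral_mono_ae (L1.integrable_coeFn _) ((hf.pos_part.const_mul p).add hdefect)
      (map_toL1_max_zero_ae_le hTpos hTmax hf hM heig hχ)
  rw [hTmass, integral_congr_ae hf.pos_part.coeFn_toL1, integral_add (hf.pos_part.const_mul p)
    hdefect, integral_const_mul, integral_const_mul] at hle
  linarith

end PositiveOperator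

theorem stmt9_general {X : Type*} [MeasurableSpace X]
    (μ : Measure X) [IsFiniteMeasure μ]
    (T : Lp ℝ 1 μ →ₗ[ℝ] Lp ℝ 1 μ)
    (hTpos : ∀ u : Lp ℝ 1 μ, (0 : X → ℝ) ≤ᵐ[μ] ⇑u → (0 : X → ℝ) ≤ᵐ[μ] ⇑(T u))
    (hTmass : ∀ u : Lp ℝ 1 μ, ∫ x, (T u) x ∂μ = ∫ x, u x ∂μ)
    (hTmax : ∀ (β : ℝ) (u : Lp ℝ 1 μ),
      ⇑u ≤ᵐ[μ] (fun _ => β) → ⇑(T u) ≤ᵐ[μ] (fun _ => β))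
    (f : X → ℝ) (hfm : MemLp f ⊤ μ) (hf1 : Integrable f μ)
    (lam t : ℝ) (hlam : 0 < lam) (ht : 0 < t)
    (heig : ⇑(T (hf1.toL1 f)) =ᵐ[μ] fun x => Real.exp (-(lam * t)) * f x)
    (hχA : Integrable (({x | 0 < f x}).indicator (fun _ => (1 : ℝ))) μ)
    (K : ℝ)
    (hK : ∫ x, |({x | 0 < f x}).indicator (fun _ => (1 : ℝ)) x - (T (hχA.toL1 _)) x| ∂μ ≤ K) :
    ((1 - Real.exp (-(lam * t))) ^ 2 / 4) * ∫ x, |f x| ∂μ ≤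
      K * (eLpNorm f ⊤ μ).toReal := by
  set p := Real.exp (-(lam * t))
  have hp0 : 0 < p := Real.exp_pos _
  have hp1 : p < 1 := Real.exp_lt_one_iff.mpr (neg_lt_zero.mpr (mul_pos hlam ht))
  set M := (eLpNorm f ⊤ μ).toReal
  have hM : ∀ᵐ x ∂μ, |f x| ≤ M := by
    simpa only [← toReal_eLpNorm hfm.aestronglyMeasurable, Real.norm_eq_abs]
      using ae_le_lpNorm_exponent_top hfm
  have hmean := integral_eq_zero_of_map_toL1_eq_const_mul hTmass hf1 hp1.ne heig
  have hcore := one_sub_mul_integral_max_zero_le hTpos hTmass hTmax hf1 hM heig hχA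
  have hposPart : 0 ≤ ∫ x, max (f x) 0 ∂μ := integral_nonneg fun _ => le_max_right _ _
  rw [integral_abs_eq_two_mul_integral_max_sub hf1, hmean, sub_zero]
  calc (1 - p) ^ 2 / 4 * (2 * ∫ x, max (f x) 0 ∂μ)
      ≤ (1 - p) * ∫ x, max (f x) 0 ∂μ := by
        nlinarith [mul_nonneg (mul_nonneg (sub_nonneg.mpr hp1.le) hposPart) hp0.le]
    _ ≤ M * K := hcore.trans (mul_le_mul_of_nonneg_left hK ENNReal.toReal_nonneg)
    _ = K * M := mul_comm _ _

/-- inequality (eq:per_nodal_set) of Theorem th:per nodal set.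
Let `μ` be a finite Borel measure on a metric space and `T : L¹ → L¹` linear,
positivity-preserving, mass-preserving and satisfying the maximum principle. Let
`f ∈ L∞`, `λ, t > 0` with `Tf = e^{−λt}·f` a.e., and `K ≥ 0` with
`‖χ_{{f>0}} − T(χ_{{f>0}})‖_{L¹} ≤ K`. Then
`K·‖f‖_∞ ≥ ((1 − e^{−λt})²/4)·‖f‖_₁`. -/
theorem stmt9 {X : Type*} [MetricSpace X] [MeasurableSpace X] [BorelSpace X]
    (μ : Measure X) [IsFiniteMeasure μ]
    (T : Lp ℝ 1 μ →ₗ[ℝ] Lp ℝ 1 μ)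
    (hTpos : ∀ u : Lp ℝ 1 μ, (0 : X → ℝ) ≤ᵐ[μ] ⇑u → (0 : X → ℝ) ≤ᵐ[μ] ⇑(T u))
    (hTmass : ∀ u : Lp ℝ 1 μ, ∫ x, (T u) x ∂μ = ∫ x, u x ∂μ)
    (hTmax : ∀ (β : ℝ) (u : Lp ℝ 1 μ),
      ⇑u ≤ᵐ[μ] (fun _ => β) → ⇑(T u) ≤ᵐ[μ] (fun _ => β))
    (f : X → ℝ) (hfm : MemLp f ⊤ μ) (hf1 : Integrable f μ)
    (lam t : ℝ) (hlam : 0 < lam) (ht : 0 < t)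
    (heig : ⇑(T (hf1.toL1 f)) =ᵐ[μ] fun x => Real.exp (-(lam * t)) * f x)
    (hχA : Integrable (({x | 0 < f x}).indicator (fun _ => (1 : ℝ))) μ)
    (K : ℝ) (hK0 : 0 ≤ K)
    (hK : ∫ x, |({x | 0 < f x}).indicator (fun _ => (1 : ℝ)) x - (T (hχA.toL1 _)) x| ∂μ ≤ K) :
    ((1 - Real.exp (-(lam * t))) ^ 2 / 4) * ∫ x, |f x| ∂μ ≤
      K * (eLpNorm f ⊤ μ).toReal :=
  stmt9_general μ T hTpos hTmass hTmax f hfm hf1 lam t hlam ht heig hχA K hK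
end

section
/- Let m be a measure on a measurable space X and let Q : L²(X,m) → L²(X,m) be a linear operator which is self-adjoint (∫ u·Qv dm = ∫ v·Qu dm for all u,v ∈ L²), maps L¹ ∩ L² into L¹ ∩ L² with ∫ Qu dm = ∫ u dm for all u ∈ L¹ ∩ L², satisfies the maximum principle in the form 0 ≤ u ≤ 1 a.e. implies 0 ≤ Qu ≤ 1 a.e., and satisfies ‖Qu‖_{L²} ≤ ρ·‖u‖_{L²} for some ρ ∈ [0,1] and all u ∈ L²(X,m). Let A ⊆ X be measurable with 0 < m(A) < ∞ and let K ≥ 0 satisfy ‖χ_A − Q(Q(χ_A))‖_{L¹} ≤ K. Then K ≥ 2·m(A)·(1 − ρ²). -/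
/-! Write `f = χ_A` and `g = Q f`. By the maximum principle `0 ≤ Q g ≤ 1`, so pointwise
`|χ_A - Q g| = χ_A + Q g - 2 χ_A Q g`. Integrating, preservation of mass gives `∫ Q g = m(A)` and
self-adjointness gives `∫ χ_A Q g = ‖g‖₂²`, hence `‖χ_A - Q² χ_A‖₁ = 2 m(A) - 2 ‖g‖₂²`, while
`‖g‖₂² ≤ ρ² ‖χ_A‖₂² = ρ² m(A)`. -/

open MeasureTheory Filter

theorem abs_indicator_one_sub {X : Type*} (A : Set X) (x : X) {y : ℝ} (hy0 : 0 ≤ y) (hy1 : y ≤ 1) :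
    |A.indicator (fun _ => (1 : ℝ)) x - y|
      = A.indicator (fun _ => 1) x + y - 2 * (A.indicator (fun _ => 1) x * y) := by
  by_cases hx : x ∈ A
  · simp only [Set.indicator_of_mem hx, abs_of_nonneg (sub_nonneg.2 hy1)]
    ring
  · simp only [Set.indicator_of_notMem hx, zero_sub, abs_neg, abs_of_nonneg hy0]
    ring

namespace MeasureTheory

variable {X : Type*} [MeasurableSpace X] {μ : Measure X}

theorem L2.integral_mul_self_eq_norm_sq (f : Lp ℝ 2 μ) : ∫ x, f x * f x ∂μ = ‖f‖ ^ 2 := by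
  rw [← real_inner_self_eq_norm_sq, L2.inner_def]
  simp only [RCLike.inner_apply, conj_trivial]

theorem MemLp.integrable_indicator_one {A : Set X}
    (hχ : MemLp (A.indicator fun _ => (1 : ℝ)) 2 μ) :
    Integrable (A.indicator fun _ => (1 : ℝ)) μ := by
  convert hχ.integrable_sq using 2 with x
  by_cases hx : x ∈ A <;> simp [hx]

theorem MemLp.norm_toLp_indicator_one_sq {A : Set X} (hA : MeasurableSet A)
    (hχ : MemLp (A.indicator fun _ => (1 : ℝ)) 2 μ) :
    ‖hχ.toLp _‖ ^ 2 = (μ A).toReal := by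
  rw [← L2.integral_mul_self_eq_norm_sq, ← measureReal_def, ← integral_indicator_one hA]
  refine integral_congr_ae ?_
  filter_upwards [hχ.coeFn_toLp] with x hx
  by_cases hxA : x ∈ A <;> simp [hx, hxA]

theorem integral_abs_indicator_one_sub {A : Set X} (hA : MeasurableSet A)
    (hχ : Integrable (A.indicator fun _ => (1 : ℝ)) μ) {h : X → ℝ} (hh : Integrable h μ)
    (h0 : 0 ≤ᵐ[μ] h) (h1 : h ≤ᵐ[μ] fun _ => 1) :
    ∫ x, |A.indicator (fun _ => (1 : ℝ)) x - h x| ∂μ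
      = (μ A).toReal + ∫ x, h x ∂μ - 2 * ∫ x, A.indicator (fun _ => 1) x * h x ∂μ := by
  have hχh : Integrable (fun x => A.indicator (fun _ => (1 : ℝ)) x * h x) μ := by
    refine (hh.indicator hA).congr (ae_of_all _ fun x => ?_)
    by_cases hx : x ∈ A <;> simp [hx]
  have hχ_add_h : Integrable (fun x => A.indicator (fun _ => (1 : ℝ)) x + h x) μ := hχ.add hh
  rw [integral_congr_ae (h0.mp (h1.mono fun x hx1 hx0 => abs_indicator_one_sub A x hx0 hx1)),
    integral_sub hχ_add_h (hχh.const_mul 2), integral_add hχ hh, integral_const_mul,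
    ← measureReal_def, ← integral_indicator_one hA]
  rfl

end MeasureTheory

theorem stmt13_general {X : Type*} [MeasurableSpace X] (μ : Measure X)
    (Q : Lp ℝ 2 μ →ₗ[ℝ] Lp ℝ 2 μ)
    (hself : ∀ u v : Lp ℝ 2 μ,
      ∫ x, u x * (Q v) x ∂μ = ∫ x, v x * (Q u) x ∂μ)
    (hmap : ∀ u : Lp ℝ 2 μ, Integrable (⇑u) μ →
      Integrable (⇑(Q u)) μ ∧ ∫ x, (Q u) x ∂μ = ∫ x, u x ∂μ)
    (hmax : ∀ u : Lp ℝ 2 μ,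
      ((0 : X → ℝ) ≤ᵐ[μ] ⇑u ∧ ⇑u ≤ᵐ[μ] (fun _ => (1 : ℝ))) →
      ((0 : X → ℝ) ≤ᵐ[μ] ⇑(Q u) ∧ ⇑(Q u) ≤ᵐ[μ] (fun _ => (1 : ℝ))))
    (ρ : ℝ)
    (hcontr : ∀ u : Lp ℝ 2 μ, ‖Q u‖ ≤ ρ * ‖u‖)
    (A : Set X) (hA : MeasurableSet A)
    (hχ : MemLp (A.indicator (fun _ => (1 : ℝ))) 2 μ)
    (K : ℝ)
    (hK : ∫ x, |A.indicator (fun _ => (1 : ℝ)) x - (Q (Q (hχ.toLp _))) x| ∂μ ≤ K) :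
    2 * (μ A).toReal * (1 - ρ ^ 2) ≤ K := by
  set f := hχ.toLp _
  have hf : ⇑f =ᵐ[μ] A.indicator fun _ => (1 : ℝ) := hχ.coeFn_toLp
  have hχ_int := hχ.integrable_indicator_one
  have hf_unit : 0 ≤ᵐ[μ] ⇑f ∧ ⇑f ≤ᵐ[μ] fun _ => (1 : ℝ) := by
    refine ⟨hf.mono fun x hx => ?_, hf.mono fun x hx => ?_⟩ <;>
      by_cases hxA : x ∈ A <;> simp [hx, hxA]
  obtain ⟨hQf_int, hQf_integral⟩ := hmap f (hχ_int.congr hf.symm)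
  obtain ⟨hQQf_int, hQQf_integral⟩ := hmap (Q f) hQf_int
  obtain ⟨hQQf_nonneg, hQQf_le_one⟩ := hmax (Q f) (hmax f hf_unit)
  have hQQf_mass : ∫ x, (Q (Q f)) x ∂μ = (μ A).toReal := by
    rw [hQQf_integral, hQf_integral, integral_congr_ae hf, ← measureReal_def,
      integral_indicator_const _ hA, smul_eq_mul, mul_one]
  have hQQf_overlap : ∫ x, A.indicator (fun _ => 1) x * (Q (Q f)) x ∂μ = ‖Q f‖ ^ 2 :=
    calc ∫ x, A.indicator (fun _ => 1) x * (Q (Q f)) x ∂μ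
        = ∫ x, f x * (Q (Q f)) x ∂μ := integral_congr_ae (hf.mono fun x hx => by simp only [hx])
      _ = ∫ x, (Q f) x * (Q f) x ∂μ := hself f (Q f)
      _ = ‖Q f‖ ^ 2 := L2.integral_mul_self_eq_norm_sq _
  have hQf_norm : ‖Q f‖ ^ 2 ≤ ρ ^ 2 * (μ A).toReal := by
    rw [← hχ.norm_toLp_indicator_one_sq hA, ← mul_pow]
    exact pow_le_pow_left₀ (norm_nonneg _) (hcontr f) 2
  rw [integral_abs_indicator_one_sub hA hχ_int hQQf_int hQQf_nonneg hQQf_le_one,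
    hQQf_mass, hQQf_overlap] at hK
  linarith

/-- key step of Theorem th: impl Buser (ii).
Let `μ` be a measure and `Q : L² → L²` linear, self-adjoint, mapping `L¹ ∩ L²` into
`L¹ ∩ L²` with preservation of the integral, satisfying the maximum principle in the form
`0 ≤ u ≤ 1 ⟹ 0 ≤ Qu ≤ 1`, and with `‖Qu‖₂ ≤ ρ‖u‖₂` for some `ρ ∈ [0,1]` and all `u`.
If `A` is measurable with `0 < μ(A) < ∞` and `K ≥ 0` satisfies
`‖χ_A − Q(Q(χ_A))‖_{L¹} ≤ K`, then `K ≥ 2·μ(A)·(1 − ρ²)`. -/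
theorem stmt13 {X : Type*} [MeasurableSpace X] (μ : Measure X)
    (Q : Lp ℝ 2 μ →ₗ[ℝ] Lp ℝ 2 μ)
    (hself : ∀ u v : Lp ℝ 2 μ,
      ∫ x, u x * (Q v) x ∂μ = ∫ x, v x * (Q u) x ∂μ)
    (hmap : ∀ u : Lp ℝ 2 μ, Integrable (⇑u) μ →
      Integrable (⇑(Q u)) μ ∧ ∫ x, (Q u) x ∂μ = ∫ x, u x ∂μ)
    (hmax : ∀ u : Lp ℝ 2 μ,
      ((0 : X → ℝ) ≤ᵐ[μ] ⇑u ∧ ⇑u ≤ᵐ[μ] (fun _ => (1 : ℝ))) →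
      ((0 : X → ℝ) ≤ᵐ[μ] ⇑(Q u) ∧ ⇑(Q u) ≤ᵐ[μ] (fun _ => (1 : ℝ))))
    (ρ : ℝ) (hρ0 : 0 ≤ ρ) (hρ1 : ρ ≤ 1)
    (hcontr : ∀ u : Lp ℝ 2 μ, ‖Q u‖ ≤ ρ * ‖u‖)
    (A : Set X) (hA : MeasurableSet A) (hA0 : 0 < μ A) (hAfin : μ A < ⊤)
    (hχ : MemLp (A.indicator (fun _ => (1 : ℝ))) 2 μ)
    (K : ℝ)
    (hK : ∫ x, |A.indicator (fun _ => (1 : ℝ)) x - (Q (Q (hχ.toLp _))) x| ∂μ ≤ K) :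
    2 * (μ A).toReal * (1 - ρ ^ 2) ≤ K :=
  stmt13_general μ Q hself hmap hmax ρ hcontr A hA hχ K hK
end
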